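/- arXiv:2203.02040 — 9 statements merged into one kernel-verified Lean document; each statement's English description precedes it below -/
import Mathlib

section
/- Every finite nontrivial tree T (a connected acyclic simple graph with at least one edge) satisfies χ'_CF(T) ≤ 3. -/
open SimpleGraph
open SimpleGraph.Walk

/-- An edge `e` is *satisfied* by the colouring `c` of (the edges of) the graph `H` if some
colour is assigned by `c` to exactly one edge of `H` incident to an endpoint of `e`. -/
def CFSatisfies {V : Type*} {k : ℕ} (H : SimpleGraph V) (c : Sym2 V → Fin k) (e : Sym2 V) :
    Prop :=
  ∃ col : Fin k, ∃! f : Sym2 V, f ∈ H.edgeSet ∧ (∃ x ∈ e, x ∈ f) ∧ c f = col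

/-- The conflict-free chromatic index `χ'_CF(G)`: the least `k` such that `G` admits an edge
colouring with `k` colours in which every edge of `G` is satisfied. -/
noncomputable def cfChromIndex {V : Type*} (G : SimpleGraph V) : ℕ :=
  sInf {k | ∃ c : Sym2 V → Fin k, ∀ e ∈ G.edgeSet, CFSatisfies G c e}

/-- The parameter `χ'_sCF(G)`: the least `k` for which some subgraph `H` of `G` admits an edge
colouring with `k` colours such that every edge of `G` is satisfied. -/
noncomputable def scfChromIndex {V : Type*} (G : SimpleGraph V) : ℕ :=
  sInf {k | ∃ H : SimpleGraph V, H ≤ G ∧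
    ∃ c : Sym2 V → Fin k, ∀ e ∈ G.edgeSet, CFSatisfies H c e}


private lemma cf_exists_path {V : Type*} [DecidableEq V] {T : SimpleGraph V} (hc : T.Connected) (u v : V) :
    ∃ p : T.Walk u v, p.IsPath ∧ p.length = T.dist u v := by
  obtain ⟨w, hw⟩ := (hc u v).exists_walk_length_eq_dist
  exact ⟨w.bypass, w.bypass_isPath,
    le_antisymm (hw ▸ w.length_bypass_le) (T.dist_le _)⟩

private lemma cf_path_length {V : Type*} [DecidableEq V] {T : SimpleGraph V} (hT : T.IsTree) {u v : V}
    (p : T.Walk u v) (hp : p.IsPath) : p.length = T.dist u v := by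
  obtain ⟨q, hq, hql⟩ := cf_exists_path hT.isConnected u v
  rw [(hT.existsUnique_path u v).unique hp hq, hql]

private lemma cf_concat_isPath {V : Type*} {T : SimpleGraph V} {u v w : V} {p : T.Walk u v}
    (hp : p.IsPath) (h : T.Adj v w) (hw : w ∉ p.support) : (p.concat h).IsPath := by
  rw [← isPath_reverse_iff, reverse_concat]
  exact hp.reverse.cons (by simpa using hw)

private lemma cf_mem_path {V : Type*} [DecidableEq V] {T : SimpleGraph V} (hT : T.IsTree) {r a x : V}
    {P : T.Walk r a} (hP : P.IsPath) (hx : x ∈ P.support)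
    (hge : T.dist r a ≤ T.dist r x) : x = a := by
  have h1 : (P.takeUntil x hx).length = T.dist r x := cf_path_length hT _ (hP.takeUntil hx)
  have h2 : (P.dropUntil x hx).length = T.dist x a := cf_path_length hT _ (hP.dropUntil hx)
  have h3 := congrArg Walk.length (P.take_spec hx)
  rw [length_append] at h3
  have h4 : P.length = T.dist r a := cf_path_length hT P hP
  have h5 : T.dist x a = 0 := by omega
  exact (hT.isConnected.dist_eq_zero_iff).mp h5

private lemma cf_unique_parent {V : Type*} [DecidableEq V] {T : SimpleGraph V}
    (hT : T.IsTree) {r a p p' : V} (h : T.Adj p a) (h' : T.Adj p' a)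
    (hd : T.dist r p + 1 = T.dist r a) (hd' : T.dist r p' + 1 = T.dist r a) : p = p' := by
  obtain ⟨P, hP, hPl⟩ := cf_exists_path hT.isConnected r p
  obtain ⟨P', hP', hPl'⟩ := cf_exists_path hT.isConnected r p'
  have haP : a ∉ P.support := by
    intro hx
    have hap := cf_mem_path hT hP hx (by omega)
    rw [← hap] at hd; omega
  have haP' : a ∉ P'.support := by
    intro hx
    have hap := cf_mem_path hT hP' hx (by omega)
    rw [← hap] at hd'; omega
  have hQ : (P.concat h).IsPath := cf_concat_isPath hP h haP
  have hQ' : (P'.concat h').IsPath := cf_concat_isPath hP' h' haP'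
  obtain ⟨hv, -⟩ := Walk.concat_inj ((hT.existsUnique_path r a).unique hQ hQ')
  exact hv

private lemma cf_adj_dist_ne {V : Type*} [DecidableEq V] {T : SimpleGraph V}
    (hT : T.IsTree) {r a b : V} (h : T.Adj a b) : T.dist r a ≠ T.dist r b := by
  intro he
  obtain ⟨P, hP, hPl⟩ := cf_exists_path hT.isConnected r a
  have hbP : b ∉ P.support := by
    intro hx
    exact h.ne (cf_mem_path hT hP hx (by omega)).symm
  have hl := cf_path_length hT _ (cf_concat_isPath hP h hbP)
  rw [length_concat] at hl
  omega

private lemma cf_exists_parent {V : Type*} {T : SimpleGraph V} (hc : T.Connected) {r a : V}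
    (ha : a ≠ r) : ∃ p, T.Adj a p ∧ T.dist r p + 1 = T.dist r a := by
  obtain ⟨w, hw⟩ := (hc r a).exists_walk_length_eq_dist
  have hpos : 0 < T.dist r a := hc.pos_dist_of_ne (Ne.symm ha)
  have hn : ¬ w.reverse.Nil := by
    rw [nil_iff_length_eq, length_reverse, hw]; omega
  obtain ⟨p, h, q, hq⟩ := not_nil_iff.mp hn
  refine ⟨p, h, ?_⟩
  have h1 : T.dist r p ≤ q.reverse.length := T.dist_le _
  rw [length_reverse] at h1
  have h2 : q.length + 1 = T.dist r a := by
    have := congrArg Walk.length hq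
    rw [length_reverse, length_cons, hw] at this
    omega
  have h3 : T.dist r a ≤ T.dist r p + 1 := by
    have ht := hc.dist_triangle (u := r) (v := p) (w := a)
    rw [dist_eq_one_iff_adj.mpr h.symm] at ht
    exact ht
  omega

/-- Every finite nontrivial tree satisfies `χ'_CF(T) ≤ 3`. -/
theorem cfChromIndex_tree_le_three {V : Type*} [Fintype V] (T : SimpleGraph V)
    (hT : T.IsTree) (hE : T.edgeSet.Nonempty) :
    cfChromIndex T ≤ 3 := by
  classical
  have hc := hT.isConnected
  obtain ⟨x, y, hxy⟩ : ∃ x y, T.Adj x y := by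
    obtain ⟨e, he⟩ := hE
    exact Sym2.ind (fun x y h => ⟨x, y, h⟩) e he
  obtain ⟨r, -, hmax0⟩ := Finset.exists_max_image Finset.univ (T.dist x)
    ⟨x, Finset.mem_univ x⟩
  have hmax : ∀ v, T.dist x v ≤ T.dist x r := fun v => hmax0 v (Finset.mem_univ v)
  have hrx : r ≠ x := by
    intro h
    have h1 : T.dist x y ≤ T.dist x r := hmax y
    rw [h, SimpleGraph.dist_self] at h1
    have := hc.pos_dist_of_ne hxy.ne
    omega
  obtain ⟨b0, hb0, hb0d⟩ := cf_exists_parent hc hrx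
  have hleaf : ∀ w, T.Adj r w → w = b0 := by
    intro w hw
    have hne : T.dist x r ≠ T.dist x w := cf_adj_dist_ne hT hw
    have h1 : T.dist x w ≤ T.dist x r := hmax w
    have h2 : T.dist x r ≤ T.dist x w + 1 := by
      have ht := hc.dist_triangle (u := x) (v := w) (w := r)
      rw [dist_eq_one_iff_adj.mpr hw.symm] at ht
      exact ht
    exact cf_unique_parent hT hw.symm hb0.symm (by omega) hb0d
  -- the colouring
  let c : Sym2 V → Fin 3 := fun e =>
    ⟨Sym2.lift ⟨fun u w => max (T.dist r u) (T.dist r w), fun u w => max_comm _ _⟩ e % 3,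
      Nat.mod_lt _ (by norm_num)⟩
  have hcval : ∀ u w : V, (c s(u,w)).val = max (T.dist r u) (T.dist r w) % 3 :=
    fun u w => rfl
  have hstep : ∀ u w, T.Adj u w →
      (T.dist r w = T.dist r u + 1 ∨ T.dist r u = T.dist r w + 1) := by
    intro u w h
    have h1 : T.dist r w ≤ T.dist r u + 1 := by
      have ht := hc.dist_triangle (u := r) (v := u) (w := w)
      rw [dist_eq_one_iff_adj.mpr h] at ht; exact ht
    have h2 : T.dist r u ≤ T.dist r w + 1 := by
      have ht := hc.dist_triangle (u := r) (v := w) (w := u)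
      rw [dist_eq_one_iff_adj.mpr h.symm] at ht; exact ht
    have h3 := cf_adj_dist_ne hT (r := r) h
    omega
  rw [cfChromIndex]
  apply Nat.sInf_le
  refine ⟨c, ?_⟩
  have key : ∀ a b, T.Adj a b → T.dist r b = T.dist r a + 1 → CFSatisfies T c s(a,b) := by
    intro a b hab hd
    by_cases har : a = r
    · -- root case
      subst har
      have hDa : T.dist a a = 0 := SimpleGraph.dist_self
      have claim : ∀ u w, T.Adj u w → (u = a ∨ u = b) → c s(u,w) = c s(a,b) →
          s(u,w) = s(a,b) := by
        rintro u w huw (rfl | rfl) hcol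
        · rw [hleaf w huw, hleaf b hab]
        · have hval := congrArg Fin.val hcol
          rw [hcval, hcval] at hval
          rcases hstep u w huw with h1 | h1
          · exfalso; omega
          · have hw0 : T.dist a w = 0 := by omega
            have : a = w := hc.dist_eq_zero_iff.mp hw0
            rw [← this, Sym2.eq_swap]
      refine ⟨c s(a,b), s(a,b), ⟨T.mem_edgeSet.mpr hab, ⟨a, by simp, by simp⟩, rfl⟩, ?_⟩
      intro f hf
      revert hf
      induction f using Sym2.ind with
      | _ u w =>
        rintro ⟨hfE, ⟨z, hz1, hz2⟩, hfc⟩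
        have huw := T.mem_edgeSet.mp hfE
        rw [Sym2.mem_iff] at hz1 hz2
        rcases hz2 with rfl | rfl
        · exact claim z w huw hz1 hfc
        · rw [Sym2.eq_swap]
          exact claim z u huw.symm (by tauto) (by rwa [Sym2.eq_swap] at hfc)
    · -- non-root case
      obtain ⟨p, hap, hpd⟩ := cf_exists_parent hc har
      have hDa : 0 < T.dist r a := hc.pos_dist_of_ne (Ne.symm har)
      have claim : ∀ u w, T.Adj u w → (u = a ∨ u = b) → c s(u,w) = c s(a,p) →
          s(u,w) = s(a,p) := by
        rintro u w huw (rfl | rfl) hcol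
        · have hval := congrArg Fin.val hcol
          rw [hcval, hcval] at hval
          have hmaxap : max (T.dist r u) (T.dist r p) = T.dist r u :=
            Nat.max_eq_left (by omega)
          rw [hmaxap] at hval
          rcases hstep u w huw with h1 | h1
          · exfalso
            rw [Nat.max_eq_right (by omega)] at hval
            omega
          · have := cf_unique_parent hT huw.symm hap.symm h1.symm hpd
            rw [this]
        · exfalso
          have hval := congrArg Fin.val hcol
          rw [hcval, hcval] at hval
          rw [Nat.max_eq_left (a := T.dist r a) (by omega)] at hval
          rcases hstep u w huw with h1 | h1 <;>
            [rw [Nat.max_eq_right (by omega)] at hval;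
             rw [Nat.max_eq_left (by omega)] at hval] <;> omega
      refine ⟨c s(a,p), s(a,p), ⟨T.mem_edgeSet.mpr hap, ⟨a, by simp, by simp⟩, rfl⟩, ?_⟩
      intro f hf
      revert hf
      induction f using Sym2.ind with
      | _ u w =>
        rintro ⟨hfE, ⟨z, hz1, hz2⟩, hfc⟩
        have huw := T.mem_edgeSet.mp hfE
        rw [Sym2.mem_iff] at hz1 hz2
        rcases hz2 with rfl | rfl
        · exact claim z w huw hz1 hfc
        · rw [Sym2.eq_swap]
          exact claim z u huw.symm (by tauto) (by rwa [Sym2.eq_swap] at hfc)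
  intro e he
  revert he
  induction e using Sym2.ind with
  | _ a b =>
    intro he
    have hab := T.mem_edgeSet.mp he
    rcases hstep a b hab with h1 | h1
    · exact key a b hab h1
    · rw [Sym2.eq_swap]
      exact key b a hab.symm h1
end

section
/- For all integers n, m ≥ 1 with min{n, m} ≤ 2, the complete bipartite graph K_{n,m} satisfies χ'_CF(K_{n,m}) ≤ 2. -/
open SimpleGraph

private lemma edge_form {n m : ℕ} {e : Sym2 (Fin n ⊕ Fin m)}
    (he : e ∈ (completeBipartiteGraph (Fin n) (Fin m)).edgeSet) :
    ∃ i j, e = s(Sum.inl i, Sum.inr j) := by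
  obtain ⟨⟨u, v⟩, rfl⟩ := e.exists_rep
  rw [SimpleGraph.mem_edgeSet] at he
  rcases u with i | j <;> rcases v with i' | j' <;> simp_all

/-- For `n, m ≥ 1` with `min n m ≤ 2`, `χ'_CF(K_{n,m}) ≤ 2`. -/
theorem cfChromIndex_completeBipartite_le_two (n m : ℕ) (hn : 1 ≤ n) (hm : 1 ≤ m)
    (hmin : min n m ≤ 2) :
    cfChromIndex (completeBipartiteGraph (Fin n) (Fin m)) ≤ 2 := by
  classical
  rcases min_le_iff.mp hmin with h2 | h2
  · interval_cases n
    · -- n = 1 : colour by membership of right vertex 0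
      apply Nat.sInf_le
      refine ⟨fun f => if Sum.inr (⟨0, hm⟩ : Fin m) ∈ f then 0 else 1, ?_⟩
      intro e he
      obtain ⟨i, j, rfl⟩ := edge_form he
      refine ⟨0, s(Sum.inl i, Sum.inr ⟨0, hm⟩), ⟨by simp, ⟨Sum.inl i, by simp, by simp⟩, by simp⟩, ?_⟩
      rintro f ⟨hf, -, hc⟩
      obtain ⟨i', j', rfl⟩ := edge_form hf
      have hmem : Sum.inr (⟨0, hm⟩ : Fin m) ∈ s(Sum.inl i', Sum.inr j') := by
        by_contra h; simp [h] at hc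
      have hj' : j' = ⟨0, hm⟩ := by simpa [eq_comm] using hmem
      rw [hj', Subsingleton.elim i' i]
    · -- n = 2 : colour by membership of left vertex 1
      apply Nat.sInf_le
      refine ⟨fun f => if Sum.inl (1 : Fin 2) ∈ f then 0 else 1, ?_⟩
      intro e he
      obtain ⟨i, j, rfl⟩ := edge_form he
      fin_cases i
      · refine ⟨0, s(Sum.inl 1, Sum.inr j), ⟨by simp, ⟨Sum.inr j, by simp, by simp⟩, by simp⟩, ?_⟩
        rintro f ⟨hf, ⟨x, hx, hxf⟩, hc⟩
        obtain ⟨i', j', rfl⟩ := edge_form hf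
        have hmem : Sum.inl (1 : Fin 2) ∈ s(Sum.inl i', Sum.inr j') := by
          by_contra h; simp [h] at hc
        have hi' : i' = 1 := by simpa [eq_comm] using hmem
        subst hi'
        simp only [Sym2.mem_iff] at hx hxf
        rcases hx with rfl | rfl <;> rcases hxf with h | h <;> simp_all
      · refine ⟨1, s(Sum.inl 0, Sum.inr j), ⟨by simp, ⟨Sum.inr j, by simp, by simp⟩, by simp⟩, ?_⟩
        rintro f ⟨hf, ⟨x, hx, hxf⟩, hc⟩
        obtain ⟨i', j', rfl⟩ := edge_form hf
        have hmem : Sum.inl (1 : Fin 2) ∉ s(Sum.inl i', Sum.inr j') := by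
          intro h; simp [h] at hc
        have hi' : i' = 0 := by
          have h1 : i' ≠ 1 := by rintro rfl; exact hmem (by simp)
          omega
        subst hi'
        simp only [Sym2.mem_iff] at hx hxf
        rcases hx with rfl | rfl <;> rcases hxf with h | h <;> simp_all
  · interval_cases m
    · -- m = 1 : colour by membership of left vertex 0
      apply Nat.sInf_le
      refine ⟨fun f => if Sum.inl (⟨0, hn⟩ : Fin n) ∈ f then 0 else 1, ?_⟩
      intro e he
      obtain ⟨i, j, rfl⟩ := edge_form he
      refine ⟨0, s(Sum.inl ⟨0, hn⟩, Sum.inr j), ⟨by simp, ⟨Sum.inr j, by simp, by simp⟩, by simp⟩, ?_⟩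
      rintro f ⟨hf, -, hc⟩
      obtain ⟨i', j', rfl⟩ := edge_form hf
      have hmem : Sum.inl (⟨0, hn⟩ : Fin n) ∈ s(Sum.inl i', Sum.inr j') := by
        by_contra h; simp [h] at hc
      have hi' : i' = ⟨0, hn⟩ := by simpa [eq_comm] using hmem
      rw [hi', Subsingleton.elim j' j]
    · -- m = 2 : colour by membership of right vertex 1
      apply Nat.sInf_le
      refine ⟨fun f => if Sum.inr (1 : Fin 2) ∈ f then 0 else 1, ?_⟩
      intro e he
      obtain ⟨i, j, rfl⟩ := edge_form he
      fin_cases j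
      · refine ⟨0, s(Sum.inl i, Sum.inr 1), ⟨by simp, ⟨Sum.inl i, by simp, by simp⟩, by simp⟩, ?_⟩
        rintro f ⟨hf, ⟨x, hx, hxf⟩, hc⟩
        obtain ⟨i', j', rfl⟩ := edge_form hf
        have hmem : Sum.inr (1 : Fin 2) ∈ s(Sum.inl i', Sum.inr j') := by
          by_contra h; simp [h] at hc
        have hj' : j' = 1 := by simpa [eq_comm] using hmem
        subst hj'
        simp only [Sym2.mem_iff] at hx hxf
        rcases hx with rfl | rfl <;> rcases hxf with h | h <;> simp_all
      · refine ⟨1, s(Sum.inl i, Sum.inr 0), ⟨by simp, ⟨Sum.inl i, by simp, by simp⟩, by simp⟩, ?_⟩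
        rintro f ⟨hf, ⟨x, hx, hxf⟩, hc⟩
        obtain ⟨i', j', rfl⟩ := edge_form hf
        have hmem : Sum.inr (1 : Fin 2) ∉ s(Sum.inl i', Sum.inr j') := by
          intro h; simp [h] at hc
        have hj' : j' = 0 := by
          have h1 : j' ≠ 1 := by rintro rfl; exact hmem (by simp)
          omega
        subst hj'
        simp only [Sym2.mem_iff] at hx hxf
        rcases hx with rfl | rfl <;> rcases hxf with h | h <;> simp_all
end

section
/- For all integers n, m ≥ 3, the complete bipartite graph K_{n,m} satisfies χ'_CF(K_{n,m}) = 3. -/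
open SimpleGraph

open Finset

lemma aux_exists_unique_iff_card {α : Type*} [Fintype α] (p : α → Prop) [DecidablePred p] :
    (∃! a, p a) ↔ (Finset.univ.filter p).card = 1 := by
  rw [Finset.card_eq_one]
  constructor
  · rintro ⟨a, ha, hu⟩
    refine ⟨a, ?_⟩
    ext b
    simp only [Finset.mem_filter, Finset.mem_univ, true_and, Finset.mem_singleton]
    exact ⟨fun h => hu b h, fun h => h ▸ ha⟩
  · rintro ⟨a, ha⟩
    have h1 : p a := by
      have := Finset.mem_singleton_self a
      rw [← ha] at this
      exact (Finset.mem_filter.mp this).2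
    refine ⟨a, h1, fun b hb => ?_⟩
    have hb' : b ∈ Finset.univ.filter p := Finset.mem_filter.mpr ⟨Finset.mem_univ b, hb⟩
    rw [ha] at hb'
    exact Finset.mem_singleton.mp hb'

lemma mem_cbg_edgeSet {n m : ℕ} (f : Sym2 (Fin n ⊕ Fin m)) :
    f ∈ (completeBipartiteGraph (Fin n) (Fin m)).edgeSet ↔
      ∃ i j, f = s(Sum.inl i, Sum.inr j) := by
  induction f with
  | _ x y =>
    rw [SimpleGraph.mem_edgeSet]
    cases x with
    | inl a =>
      cases y with
      | inl b => simp [Sym2.eq_iff]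
      | inr b =>
        simp only [completeBipartiteGraph_adj]
        constructor
        · intro _; exact ⟨a, b, rfl⟩
        · intro _; simp
    | inr a =>
      cases y with
      | inl b =>
        simp only [completeBipartiteGraph_adj]
        constructor
        · intro _; exact ⟨b, a, Sym2.eq_swap⟩
        · intro _; simp
      | inr b => simp [Sym2.eq_iff]


lemma no_two (n m : ℕ) (hn : 3 ≤ n) (hm : 3 ≤ m) (χ : Fin n → Fin m → Fin 2)
    (h : ∀ i j, ∃ d : Fin 2,
      ((Finset.univ.filter fun j' => χ i j' = d).card
        + (Finset.univ.filter fun i' => χ i' j = d).card)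
        = 1 + (if χ i j = d then 1 else 0)) : False := by
  classical
  choose d hd using h
  have e2 : ∀ x : Fin 2, x = 0 ∨ x = 1 := by decide
  have hsumA : ∀ i (D : Fin 2),
      (Finset.univ.filter fun j' => χ i j' = 0).card
        + (Finset.univ.filter fun j' => χ i j' = 1).card = m := by
    intro i D
    have h0 := Finset.card_filter_add_card_filter_not
      (s := (Finset.univ : Finset (Fin m))) (p := fun j' => χ i j' = 0)
    have hc : Finset.univ.filter (fun j' => ¬ (χ i j' = 0))
        = Finset.univ.filter (fun j' => χ i j' = 1) := by
      apply Finset.filter_congr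
      intro x _
      constructor
      · intro hx; rcases e2 (χ i x) with h0 | h1; exact absurd h0 hx; exact h1
      · intro hx; rw [hx]; decide
    rw [hc] at h0
    simpa using h0
  have hsumB : ∀ j (D : Fin 2),
      (Finset.univ.filter fun i' => χ i' j = 0).card
        + (Finset.univ.filter fun i' => χ i' j = 1).card = n := by
    intro j D
    have h0 := Finset.card_filter_add_card_filter_not
      (s := (Finset.univ : Finset (Fin n))) (p := fun i' => χ i' j = 0)
    have hc : Finset.univ.filter (fun i' => ¬ (χ i' j = 0))
        = Finset.univ.filter (fun i' => χ i' j = 1) := by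
      apply Finset.filter_congr
      intro x _
      constructor
      · intro hx; rcases e2 (χ x j) with h0 | h1; exact absurd h0 hx; exact h1
      · intro hx; rw [hx]; decide
    rw [hc] at h0
    simpa using h0
  have hindA : ∀ i j (D : Fin 2), (if χ i j = D then 1 else 0)
      ≤ (Finset.univ.filter fun j' => χ i j' = D).card := by
    intro i j D
    split
    · next hx =>
      exact Finset.card_pos.mpr ⟨j, by simp [hx]⟩
    · exact Nat.zero_le _
  have hindB : ∀ i j (D : Fin 2), (if χ i j = D then 1 else 0)
      ≤ (Finset.univ.filter fun i' => χ i' j = D).card := by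
    intro i j D
    split
    · next hx =>
      exact Finset.card_pos.mpr ⟨i, by simp [hx]⟩
    · exact Nat.zero_le _
  have hAle : ∀ i j, (Finset.univ.filter fun j' => χ i j' = d i j).card ≤ 1 := by
    intro i j
    have h1 := hd i j
    have h2 := hindB i j (d i j)
    omega
  have hBle : ∀ i j, (Finset.univ.filter fun i' => χ i' j = d i j).card ≤ 1 := by
    intro i j
    have h1 := hd i j
    have h2 := hindA i j (d i j)
    omega
  have hne2 : ∀ x y : Fin 2, x ≠ y → (x = 0 ∧ y = 1) ∨ (x = 1 ∧ y = 0) := by decide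
  have hL : ∀ i j j', d i j = d i j' := by
    intro i j j'
    by_contra hne
    have h1 := hAle i j
    have h2 := hAle i j'
    have h3 := hsumA i 0
    rcases hne2 _ _ hne with ⟨hx, hy⟩ | ⟨hx, hy⟩ <;> rw [hx] at h1 <;> rw [hy] at h2 <;> omega
  have hR : ∀ i i' j, d i j = d i' j := by
    intro i i' j
    by_contra hne
    have h1 := hBle i j
    have h2 := hBle i' j
    have h3 := hsumB j 0
    rcases hne2 _ _ hne with ⟨hx, hy⟩ | ⟨hx, hy⟩ <;> rw [hx] at h1 <;> rw [hy] at h2 <;> omega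
  obtain ⟨i0, _⟩ : ∃ i0 : Fin n, True := ⟨⟨0, by omega⟩, trivial⟩
  obtain ⟨j0, _⟩ : ∃ j0 : Fin m, True := ⟨⟨0, by omega⟩, trivial⟩
  set D : Fin 2 := d i0 j0 with hD
  have hDall : ∀ i j, d i j = D := by
    intro i j
    calc d i j = d i j0 := hL i j j0
    _ = d i0 j0 := hR i i0 j0
  have heq : ∀ i j, (Finset.univ.filter fun j' => χ i j' = D).card
      + (Finset.univ.filter fun i' => χ i' j = D).card
      = 1 + (if χ i j = D then 1 else 0) := by
    intro i j
    have h0 := hd i j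
    rw [hDall i j] at h0
    exact h0
  have hA1 : ∀ i, (Finset.univ.filter fun j' => χ i j' = D).card ≤ 1 := by
    intro i
    have := hAle i j0
    rw [hDall i j0] at this
    exact this
  have hB1 : ∀ j, (Finset.univ.filter fun i' => χ i' j = D).card ≤ 1 := by
    intro j
    have := hBle i0 j
    rw [hDall i0 j] at this
    exact this
  have hAzero : ∀ i, (Finset.univ.filter fun j' => χ i j' = D).card = 0
      → ∀ j, χ i j ≠ D := by
    intro i hAi j hx
    have hpos : 0 < (Finset.univ.filter fun j' => χ i j' = D).card :=
      Finset.card_pos.mpr ⟨j, by simp [hx]⟩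
    omega
  have hAall : ∀ i, (∀ j, χ i j = D)
      → (Finset.univ.filter fun j' => χ i j' = D).card = m := by
    intro i hall
    have h0 : (Finset.univ.filter fun j' => χ i j' = D) = Finset.univ := by
      apply Finset.filter_true_of_mem; intro x _; exact hall x
    simp [h0]
  have hBall : ∀ j, (∀ i, χ i j = D)
      → (Finset.univ.filter fun i' => χ i' j = D).card = n := by
    intro j hall
    have h0 : (Finset.univ.filter fun i' => χ i' j = D) = Finset.univ := by
      apply Finset.filter_true_of_mem; intro x _; exact hall x
    simp [h0]
  by_cases hex : ∃ i1, (Finset.univ.filter fun j' => χ i1 j' = D).card = 0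
  · obtain ⟨i1, hi1⟩ := hex
    have hBone : ∀ j, (Finset.univ.filter fun i' => χ i' j = D).card = 1 := by
      intro j
      have h0 := heq i1 j
      rw [if_neg (hAzero i1 hi1 j)] at h0
      omega
    have hAind : ∀ i j, (Finset.univ.filter fun j' => χ i j' = D).card
        = (if χ i j = D then 1 else 0) := by
      intro i j
      have h0 := heq i j
      rw [hBone j] at h0
      omega
    have hA0 : ∀ i, (Finset.univ.filter fun j' => χ i j' = D).card = 0 := by
      intro i
      by_contra hne
      have h1 : (Finset.univ.filter fun j' => χ i j' = D).card = 1 := by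
        have := hA1 i; omega
      have hall : ∀ j, χ i j = D := by
        intro j
        have h0 := hAind i j
        rw [h1] at h0
        by_contra hc
        rw [if_neg hc] at h0
        omega
      have := hAall i hall
      omega
    have hB0 : (Finset.univ.filter fun i' => χ i' j0 = D).card = 0 := by
      have h0 : (Finset.univ.filter fun i' => χ i' j0 = D) = ∅ := by
        apply Finset.filter_false_of_mem
        intro x _
        exact hAzero x (hA0 x) j0
      simp [h0]
    have := hBone j0
    omega
  · push_neg at hex
    have hAone : ∀ i, (Finset.univ.filter fun j' => χ i j' = D).card = 1 := by
      intro i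
      have h1 := hA1 i
      have h2 := hex i
      omega
    have hBind : ∀ i j, (Finset.univ.filter fun i' => χ i' j = D).card
        = (if χ i j = D then 1 else 0) := by
      intro i j
      have h0 := heq i j
      rw [hAone i] at h0
      omega
    have hB0 : ∀ j, (Finset.univ.filter fun i' => χ i' j = D).card = 0 := by
      intro j
      by_contra hne
      have h1 : (Finset.univ.filter fun i' => χ i' j = D).card = 1 := by
        have := hB1 j; omega
      have hall : ∀ i, χ i j = D := by
        intro i
        have h0 := hBind i j
        rw [h1] at h0
        by_contra hc
        rw [if_neg hc] at h0
        omega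
      have := hBall j hall
      omega
    have hnone : ∀ i j, χ i j ≠ D := by
      intro i j hc
      have h0 := hBind i j
      rw [hB0 j, if_pos hc] at h0
      omega
    have hA0 : (Finset.univ.filter fun j' => χ i0 j' = D).card = 0 := by
      have h0 : (Finset.univ.filter fun j' => χ i0 j' = D) = ∅ := by
        apply Finset.filter_false_of_mem
        intro x _
        exact hnone i0 x
      simp [h0]
    have := hAone i0
    omega

lemma reduce {n m : ℕ} {k : ℕ} (c : Sym2 (Fin n ⊕ Fin m) → Fin k)
    (hc : ∀ e ∈ (completeBipartiteGraph (Fin n) (Fin m)).edgeSet,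
      CFSatisfies (completeBipartiteGraph (Fin n) (Fin m)) c e)
    (i : Fin n) (j : Fin m) :
    ∃ d : Fin k,
      ((Finset.univ.filter fun j' => c s(Sum.inl i, Sum.inr j') = d).card
        + (Finset.univ.filter fun i' => c s(Sum.inl i', Sum.inr j) = d).card)
        = 1 + (if c s(Sum.inl i, Sum.inr j) = d then 1 else 0) := by
  classical
  set e : Sym2 (Fin n ⊕ Fin m) := s(Sum.inl i, Sum.inr j) with he
  have hemem : e ∈ (completeBipartiteGraph (Fin n) (Fin m)).edgeSet := by
    rw [mem_cbg_edgeSet]; exact ⟨i, j, rfl⟩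
  obtain ⟨col, hcol⟩ := hc e hemem
  refine ⟨col, ?_⟩
  -- convert ∃! to card
  rw [aux_exists_unique_iff_card] at hcol
  set gA : Fin m → Sym2 (Fin n ⊕ Fin m) := fun j' => s(Sum.inl i, Sum.inr j') with hgA
  set gB : Fin n → Sym2 (Fin n ⊕ Fin m) := fun i' => s(Sum.inl i', Sum.inr j) with hgB
  have hgAinj : Function.Injective gA := by
    intro a b hab
    simp only [hgA, Sym2.eq_iff] at hab
    rcases hab with ⟨-, h2⟩ | ⟨h1, -⟩
    · exact Sum.inr.inj h2
    · exact absurd h1 (by simp)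
  have hgBinj : Function.Injective gB := by
    intro a b hab
    simp only [hgB, Sym2.eq_iff] at hab
    rcases hab with ⟨h1, -⟩ | ⟨h1, -⟩
    · exact Sum.inl.inj h1
    · exact absurd h1 (by simp)
  set A : Finset (Sym2 (Fin n ⊕ Fin m)) := Finset.univ.image gA with hA
  set B : Finset (Sym2 (Fin n ⊕ Fin m)) := Finset.univ.image gB with hB
  -- the incidence set equals A ∪ B
  have hT : Finset.univ.filter (fun f => f ∈ (completeBipartiteGraph (Fin n) (Fin m)).edgeSet
      ∧ (∃ x ∈ e, x ∈ f) ∧ c f = col) = (A ∪ B).filter (fun f => c f = col) := by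
    ext f
    simp only [Finset.mem_filter, Finset.mem_univ, true_and, Finset.mem_union, hA, hB,
      Finset.mem_image]
    constructor
    · rintro ⟨hfe, ⟨x, hxe, hxf⟩, hcf⟩
      refine ⟨?_, hcf⟩
      rw [mem_cbg_edgeSet] at hfe
      obtain ⟨i', j', rfl⟩ := hfe
      rw [he] at hxe
      rw [Sym2.mem_iff] at hxe hxf
      rcases hxe with rfl | rfl
      · rcases hxf with h1 | h1
        · left
          refine ⟨j', ?_⟩
          rw [hgA]
          rw [Sum.inl.inj h1]
        · exact absurd h1 (by simp)
      · rcases hxf with h1 | h1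
        · exact absurd h1 (by simp)
        · right
          refine ⟨i', ?_⟩
          rw [hgB]
          rw [Sum.inr.inj h1]
    · rintro ⟨hf, hcf⟩
      refine ⟨?_, ?_, hcf⟩
      · rw [mem_cbg_edgeSet]
        rcases hf with ⟨j', -, rfl⟩ | ⟨i', -, rfl⟩
        · exact ⟨i, j', rfl⟩
        · exact ⟨i', j, rfl⟩
      · rcases hf with ⟨j', -, rfl⟩ | ⟨i', -, rfl⟩
        · exact ⟨Sum.inl i, by simp [he], by simp [hgA]⟩
        · exact ⟨Sum.inr j, by simp [he], by simp [hgB]⟩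
  rw [hT] at hcol
  -- A ∩ B = {e}
  have hAB : A ∩ B = {e} := by
    ext f
    simp only [Finset.mem_inter, hA, hB, Finset.mem_image, Finset.mem_singleton]
    constructor
    · rintro ⟨⟨j', -, rfl⟩, ⟨i', -, hf⟩⟩
      simp only [hgA, hgB, Sym2.eq_iff] at hf
      rcases hf with ⟨h1, h2⟩ | ⟨h1, h2⟩
      · rw [he, hgA, Sum.inr.inj h2]
      · exact absurd h1 (by simp)
    · rintro rfl
      exact ⟨⟨j, Finset.mem_univ _, rfl⟩, ⟨i, Finset.mem_univ _, rfl⟩⟩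
  -- inclusion exclusion
  have hIE := Finset.card_union_add_card_inter (A.filter (fun f => c f = col))
    (B.filter (fun f => c f = col))
  rw [← Finset.filter_union, ← Finset.filter_inter_distrib, hAB] at hIE
  rw [hcol] at hIE
  have hcA : (A.filter (fun f => c f = col)).card
      = (Finset.univ.filter fun j' => c (gA j') = col).card := by
    rw [hA, Finset.filter_image]
    exact Finset.card_image_of_injective _ hgAinj
  have hcB : (B.filter (fun f => c f = col)).card
      = (Finset.univ.filter fun i' => c (gB i') = col).card := by
    rw [hB, Finset.filter_image]
    exact Finset.card_image_of_injective _ hgBinj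
  have hsing : (Finset.filter (fun f => c f = col) {e}).card
      = if c e = col then 1 else 0 := by
    rw [Finset.filter_singleton]
    split <;> simp
  rw [hcA, hcB, hsing] at hIE
  exact hIE.symm

lemma upper (n m : ℕ) (hn : 3 ≤ n) (hm : 3 ≤ m) :
    ∃ c : Sym2 (Fin n ⊕ Fin m) → Fin 3,
      ∀ e ∈ (completeBipartiteGraph (Fin n) (Fin m)).edgeSet,
        CFSatisfies (completeBipartiteGraph (Fin n) (Fin m)) c e := by
  classical
  set i0 : Fin n := ⟨0, by omega⟩ with hi0
  set j0 : Fin m := ⟨0, by omega⟩ with hj0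
  set v0 : Fin n ⊕ Fin m := Sum.inl i0 with hv0
  set w0 : Fin n ⊕ Fin m := Sum.inr j0 with hw0
  set e00 : Sym2 (Fin n ⊕ Fin m) := s(v0, w0) with he00
  refine ⟨fun f => if f = e00 then 1 else if v0 ∈ f then 2 else 0, ?_⟩
  intro e he
  rw [mem_cbg_edgeSet] at he
  obtain ⟨i, j, rfl⟩ := he
  set c : Sym2 (Fin n ⊕ Fin m) → Fin 3 :=
    fun f => if f = e00 then 1 else if v0 ∈ f then 2 else 0 with hcdef
  have hc_e00 : c e00 = 1 := by rw [hcdef]; simp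
  have hc_one : ∀ f, c f = 1 → f = e00 := by
    intro f hf
    by_contra hne
    simp only [hcdef, if_neg hne] at hf
    split at hf <;> exact absurd hf (by decide)
  have hc_two : ∀ f, c f = 2 → f ≠ e00 ∧ v0 ∈ f := by
    intro f hf
    simp only [hcdef] at hf
    by_cases h1 : f = e00
    · rw [if_pos h1] at hf; exact absurd hf (by decide)
    · rw [if_neg h1] at hf
      by_cases h2 : v0 ∈ f
      · exact ⟨h1, h2⟩
      · rw [if_neg h2] at hf; exact absurd hf (by decide)
  by_cases hij : i = i0 ∨ j = j0
  · -- colour 1, unique edge e00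
    refine ⟨1, e00, ⟨?_, ?_, hc_e00⟩, ?_⟩
    · rw [mem_cbg_edgeSet]; exact ⟨i0, j0, rfl⟩
    · rcases hij with rfl | rfl
      · exact ⟨v0, by simp [hv0], by simp [he00]⟩
      · exact ⟨w0, by simp [hw0], by simp [he00]⟩
    · rintro g ⟨-, -, hg⟩
      exact hc_one g hg
  · push_neg at hij
    obtain ⟨hi, hj⟩ := hij
    refine ⟨2, s(v0, Sum.inr j), ⟨?_, ?_, ?_⟩, ?_⟩
    · rw [mem_cbg_edgeSet]; exact ⟨i0, j, rfl⟩
    · exact ⟨Sum.inr j, by simp, by simp⟩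
    · have hne : s(v0, Sum.inr j) ≠ e00 := by
        rw [he00]
        intro h
        rcases Sym2.eq_iff.mp h with ⟨-, h2⟩ | ⟨h1, -⟩
        · rw [hw0] at h2
          exact hj (Sum.inr.inj h2)
        · rw [hv0, hw0] at h1
          exact absurd h1 (by simp)
      simp only [hcdef]
      rw [if_neg hne, if_pos (by simp)]
    · rintro g ⟨hg1, hg2, hg3⟩
      obtain ⟨hgne, hgv0⟩ := hc_two g hg3
      rw [mem_cbg_edgeSet] at hg1
      obtain ⟨i', j', rfl⟩ := hg1
      have hi' : i' = i0 := by
        rw [Sym2.mem_iff] at hgv0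
        rcases hgv0 with h | h
        · exact (Sum.inl.inj h.symm)
        · exact absurd h (by rw [hv0]; simp)
      obtain ⟨x, hx1, hx2⟩ := hg2
      rw [Sym2.mem_iff] at hx1 hx2
      have hj' : j' = j := by
        rcases hx1 with rfl | rfl
        · rcases hx2 with h | h
          · exfalso; apply hi; rw [hi'] at h; exact Sum.inl.inj h
          · exact absurd h (by simp)
        · rcases hx2 with h | h
          · exact absurd h (by simp)
          · exact (Sum.inr.inj h).symm
      rw [hi', hj', hv0]


/-- For `n, m ≥ 3`, `χ'_CF(K_{n,m}) = 3`. -/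
theorem cfChromIndex_completeBipartite_eq_three (n m : ℕ) (hn : 3 ≤ n) (hm : 3 ≤ m) :
    cfChromIndex (completeBipartiteGraph (Fin n) (Fin m)) = 3 := by
  classical
  have h3 : 3 ∈ {k | ∃ c : Sym2 (Fin n ⊕ Fin m) → Fin k,
      ∀ e ∈ (completeBipartiteGraph (Fin n) (Fin m)).edgeSet,
        CFSatisfies (completeBipartiteGraph (Fin n) (Fin m)) c e} := upper n m hn hm
  unfold cfChromIndex
  refine le_antisymm (Nat.sInf_le h3) (le_csInf ⟨3, h3⟩ ?_)
  rintro k ⟨c, hc⟩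
  by_contra hlt
  push_neg at hlt
  have hk2 : k ≤ 2 := by omega
  set c2 : Sym2 (Fin n ⊕ Fin m) → Fin 2 := fun f => Fin.castLE hk2 (c f) with hc2def
  have hc2 : ∀ e ∈ (completeBipartiteGraph (Fin n) (Fin m)).edgeSet,
      CFSatisfies (completeBipartiteGraph (Fin n) (Fin m)) c2 e := by
    intro e he
    obtain ⟨col, f, ⟨hf1, hf2, hf3⟩, hu⟩ := hc e he
    refine ⟨Fin.castLE hk2 col, f, ⟨hf1, hf2, by simp only [hc2def]; rw [hf3]⟩, ?_⟩
    rintro g ⟨hg1, hg2, hg3⟩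
    apply hu
    refine ⟨hg1, hg2, ?_⟩
    simp only [hc2def] at hg3
    exact Fin.castLE_injective hk2 hg3
  exact no_two n m hn hm (fun i j => c2 s(Sum.inl i, Sum.inr j))
    (fun i j => reduce c2 hc2 i j)
end

section
/- For all integers n, m ≥ 1, the complete bipartite graph K_{n,m} satisfies χ'_sCF(K_{n,m}) ≤ 2. -/
open SimpleGraph

/-!
Let `H` be the star of all edges of `G` at a vertex `v` such that every edge of `G` has exactly
one endpoint adjacent to `v` (in `K_{n,m}` any vertex will do), and colour one edge `vw` of `H`
with `0` and the others with `1`. An edge through `v` sees `vw` as the only edge of `H` of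
colour `0`. Any other edge `xy`, say with `y` adjacent to `v` and `x` not, meets exactly one
edge of `H`, namely `vy`.
-/

namespace SimpleGraph

variable {V : Type*}

lemma cfSatisfies_of_existsUnique_incident {k : ℕ} {H : SimpleGraph V} (c : Sym2 V → Fin k)
    {e : Sym2 V} (h : ∃! f, f ∈ H.edgeSet ∧ ∃ x ∈ e, x ∈ f) : CFSatisfies H c e := by
  obtain ⟨f, hf, huniq⟩ := h
  exact ⟨c f, f, ⟨hf.1, hf.2, rfl⟩, fun g hg => huniq g ⟨hg.1, hg.2.1⟩⟩

section Star

variable (G : SimpleGraph V) (v : V)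

def starAt : SimpleGraph V := fromEdgeSet (G.incidenceSet v)

lemma starAt_le : G.starAt v ≤ G :=
  (fromEdgeSet_le G).2 fun _ hf => G.incidenceSet_subset v hf.1

lemma edgeSet_starAt : (G.starAt v).edgeSet = G.incidenceSet v := by
  rw [starAt, edgeSet_fromEdgeSet, sdiff_eq_left, Set.disjoint_left]
  exact fun _ hf => G.not_isDiag_of_mem_edgeSet hf.1

variable {G v}

lemma cfSatisfies_starAt_of_mem [DecidableEq V] {w : V} (hvw : G.Adj v w) {e : Sym2 V}
    (hv : v ∈ e) :
    CFSatisfies (G.starAt v) (fun f => if f = s(v, w) then 0 else 1 : Sym2 V → Fin 2) e := by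
  refine ⟨0, s(v, w), ⟨?_, ⟨v, hv, Sym2.mem_mk_left v w⟩, if_pos rfl⟩, ?_⟩
  · rwa [edgeSet_starAt, mem_incidenceSet]
  rintro f ⟨-, -, hf⟩
  by_contra hne
  simp [hne] at hf

lemma existsUnique_starAt_incident {x y : V} (hx : G.Adj v x) (hy : ¬G.Adj v y) (hyv : y ≠ v) :
    ∃! f, f ∈ (G.starAt v).edgeSet ∧ ∃ z ∈ s(x, y), z ∈ f := by
  refine ⟨s(v, x), ⟨?_, x, Sym2.mem_mk_left x y, Sym2.mem_mk_right v x⟩, ?_⟩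
  · rwa [edgeSet_starAt, mem_incidenceSet]
  rintro f ⟨hf, z, hz, hzf⟩
  rw [edgeSet_starAt] at hf
  have hzv : z ≠ v := by
    rcases Sym2.mem_iff.1 hz with rfl | rfl
    exacts [hx.ne.symm, hyv]
  have hf_eq : f = s(v, z) := (Sym2.mem_and_mem_iff hzv.symm).1 ⟨hf.2, hzf⟩
  rcases Sym2.mem_iff.1 hz with rfl | rfl
  · exact hf_eq
  · rw [hf_eq] at hf
    exact absurd hf.1 hy

theorem scfChromIndex_le_two_of_adj_xor {w : V} (hvw : G.Adj v w)
    (h : ∀ x y, G.Adj x y → Xor (G.Adj v x) (G.Adj v y)) : scfChromIndex G ≤ 2 := by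
  classical
  refine Nat.sInf_le ⟨G.starAt v, G.starAt_le v, fun f => if f = s(v, w) then 0 else 1, ?_⟩
  intro e he
  by_cases hv : v ∈ e
  · exact cfSatisfies_starAt_of_mem hvw hv
  induction e using Sym2.ind with
  | _ x y =>
    have hxv : x ≠ v := fun hx => hv (hx ▸ Sym2.mem_mk_left x y)
    have hyv : y ≠ v := fun hy => hv (hy ▸ Sym2.mem_mk_right x y)
    apply cfSatisfies_of_existsUnique_incident
    rcases h x y he with ⟨hx, hy⟩ | ⟨hy, hx⟩
    · exact existsUnique_starAt_incident hx hy hyv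
    · rw [Sym2.eq_swap]
      exact existsUnique_starAt_incident hy hx hxv

end Star

theorem scfChromIndex_completeBipartiteGraph_le_two {α β : Type*} (a : α) (b : β) :
    scfChromIndex (completeBipartiteGraph α β) ≤ 2 := by
  refine scfChromIndex_le_two_of_adj_xor (v := Sum.inl a) (w := Sum.inr b) (by simp) ?_
  rintro (x | x) (y | y) hxy <;> simp_all [xor_def]

end SimpleGraph

/-- For all `n, m ≥ 1`, `χ'_sCF(K_{n,m}) ≤ 2`. -/
theorem scfChromIndex_completeBipartite_le_two (n m : ℕ) (hn : 1 ≤ n) (hm : 1 ≤ m) :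
    scfChromIndex (completeBipartiteGraph (Fin n) (Fin m)) ≤ 2 :=
  SimpleGraph.scfChromIndex_completeBipartiteGraph_le_two ⟨0, hn⟩ ⟨0, hm⟩
end

section
/- For every finite simple graph G without isolated edges (no connected component of G is a single edge) and with at least one edge, the inequalities χ'_sCF(G) ≤ χ'_CF(G) ≤ χ'_sCF(G) + 1 hold. -/
open SimpleGraph

/-!
Taking `H = G`, every conflict-free colouring of `G` witnesses `χ'_sCF(G)`. Conversely, given a
subgraph `H ≤ G` and a colouring of `H` satisfying every edge of `G`, give all edges of `G`
outside `H` one fresh colour: the colour that occurs exactly once around an edge among the edges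
of `H` still occurs exactly once among the edges of `G`, since no new edge receives it.
-/

section Colourings

variable {V : Type*} {k : ℕ} {H G : SimpleGraph V} {c : Sym2 V → Fin k} {e : Sym2 V}

theorem cfSatisfies_of_injective (hc : Function.Injective c) (he : e ∈ H.edgeSet) :
    CFSatisfies H c e := by
  refine ⟨c e, e, ⟨he, ?_, rfl⟩, fun f hf => hc hf.2.2⟩
  induction e using Sym2.ind with
  | h x y => exact ⟨x, Sym2.mem_mk_left x y, Sym2.mem_mk_left x y⟩

open Classical in
noncomputable def extendByFreshColour (H : SimpleGraph V) (c : Sym2 V → Fin k) :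
    Sym2 V → Fin (k + 1) :=
  fun f => if f ∈ H.edgeSet then (c f).castSucc else Fin.last k

theorem extendByFreshColour_of_mem {f : Sym2 V} (hf : f ∈ H.edgeSet) :
    extendByFreshColour H c f = (c f).castSucc := by
  classical
  simp [extendByFreshColour, hf]

theorem extendByFreshColour_of_notMem {f : Sym2 V} (hf : f ∉ H.edgeSet) :
    extendByFreshColour H c f = Fin.last k := by
  classical
  simp [extendByFreshColour, hf]

theorem CFSatisfies.extendByFreshColour (hHG : H ≤ G) (h : CFSatisfies H c e) :
    CFSatisfies G (extendByFreshColour H c) e := by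
  obtain ⟨col, f, ⟨hfH, hfe, hfc⟩, huniq⟩ := h
  refine ⟨col.castSucc, f,
    ⟨edgeSet_mono hHG hfH, hfe, by rw [extendByFreshColour_of_mem hfH, hfc]⟩, ?_⟩
  rintro g ⟨-, hge, hgc⟩
  by_cases hgH : g ∈ H.edgeSet
  · rw [extendByFreshColour_of_mem hgH] at hgc
    exact huniq g ⟨hgH, hge, Fin.castSucc_injective _ hgc⟩
  · rw [extendByFreshColour_of_notMem hgH] at hgc
    exact absurd hgc.symm (Fin.castSucc_lt_last col).ne

end Colourings

section ChromIndex

variable {V : Type*} (G : SimpleGraph V)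

theorem cfChromIndex_le {k : ℕ} (c : Sym2 V → Fin k)
    (hc : ∀ e ∈ G.edgeSet, CFSatisfies G c e) : cfChromIndex G ≤ k :=
  Nat.sInf_le ⟨c, hc⟩

theorem scfChromIndex_le {k : ℕ} {H : SimpleGraph V} (hHG : H ≤ G) (c : Sym2 V → Fin k)
    (hc : ∀ e ∈ G.edgeSet, CFSatisfies H c e) : scfChromIndex G ≤ k :=
  Nat.sInf_le ⟨H, hHG, c, hc⟩

variable [Finite V]

theorem exists_cfColouring :
    ∃ k, ∃ c : Sym2 V → Fin k, ∀ e ∈ G.edgeSet, CFSatisfies G c e := by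
  obtain ⟨k, ⟨σ⟩⟩ := Finite.exists_equiv_fin (Sym2 V)
  exact ⟨k, σ, fun _ he => cfSatisfies_of_injective σ.injective he⟩

theorem exists_cfColouring_cfChromIndex :
    ∃ c : Sym2 V → Fin (cfChromIndex G), ∀ e ∈ G.edgeSet, CFSatisfies G c e :=
  Nat.sInf_mem (exists_cfColouring G)

theorem exists_scfColouring_scfChromIndex :
    ∃ H ≤ G, ∃ c : Sym2 V → Fin (scfChromIndex G), ∀ e ∈ G.edgeSet, CFSatisfies H c e := by
  obtain ⟨k, c, hc⟩ := exists_cfColouring G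
  have hne : {k | ∃ H ≤ G, ∃ c : Sym2 V → Fin k, ∀ e ∈ G.edgeSet, CFSatisfies H c e}.Nonempty :=
    ⟨k, G, le_rfl, c, hc⟩
  exact Nat.sInf_mem hne

theorem scfChromIndex_le_cfChromIndex : scfChromIndex G ≤ cfChromIndex G := by
  obtain ⟨c, hc⟩ := exists_cfColouring_cfChromIndex G
  exact scfChromIndex_le G le_rfl c hc

theorem cfChromIndex_le_scfChromIndex_add_one : cfChromIndex G ≤ scfChromIndex G + 1 := by
  obtain ⟨H, hHG, c, hc⟩ := exists_scfColouring_scfChromIndex G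
  exact cfChromIndex_le G _ fun e he => (hc e he).extendByFreshColour hHG

end ChromIndex

theorem scf_le_cf_le_scf_add_one_general {V : Type*} [Fintype V] (G : SimpleGraph V) :
    scfChromIndex G ≤ cfChromIndex G ∧ cfChromIndex G ≤ scfChromIndex G + 1 :=
  ⟨scfChromIndex_le_cfChromIndex G, cfChromIndex_le_scfChromIndex_add_one G⟩

/-- For every finite simple graph without isolated edges and with at least one edge,
`χ'_sCF(G) ≤ χ'_CF(G) ≤ χ'_sCF(G) + 1`. -/
theorem scf_le_cf_le_scf_add_one {V : Type*} [Fintype V] (G : SimpleGraph V)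
    [DecidableRel G.Adj] (hE : G.edgeSet.Nonempty)
    (hNoIsolatedEdge : ∀ u v : V, G.Adj u v → 2 ≤ G.degree u ∨ 2 ≤ G.degree v) :
    scfChromIndex G ≤ cfChromIndex G ∧ cfChromIndex G ≤ scfChromIndex G + 1 :=
  scf_le_cf_le_scf_add_one_general G
end

section
/- Every finite bipartite simple graph G without isolated vertices satisfies χ'_sCF(G) ≤ 3. -/
open SimpleGraph

/-!
Let `B` be one side of the bipartition and let every `b ∈ B` choose a neighbour `m b`; the edges
`{b, m b}` form a forest of stars centred outside `B`. In a star with at least two leaves, colour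
one leaf edge `0`, another `1` and the rest `2`; colour the edge of a one-leaf star `2`. An edge
`{u, v}` with `v ∈ B` sees the star at `u` together with the edge `{v, m v}`, and some colour occurs
exactly once among these unless the star at `u` has a single leaf and `{v, m v}` is coloured `2` as
well. Taking `m` with the fewest one-leaf stars excludes this: the star at `m v` would then have a
number of leaves other than two, and moving `v` into the star at `u` would destroy a one-leaf star
without creating one.
-/

open Finset Function

section LeafColouring

variable {V : Type*} {S : Finset V} {b v : V} {c c' : V → Fin 3}

def IsLeafColouring (S : Finset V) (c : V → Fin 3) : Prop :=
  (#S = 1 → ∀ b ∈ S, c b = 2) ∧ (2 ≤ #S → ∀ i ≠ 2, ∃! b, b ∈ S ∧ c b = i)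

namespace IsLeafColouring

lemma congr (h : IsLeafColouring S c) (hc : ∀ b ∈ S, c b = c' b) : IsLeafColouring S c' :=
  ⟨fun hS b hb => hc b hb ▸ h.1 hS b hb, fun hS i hi =>
    (existsUnique_congr fun b => and_congr_right fun hb => by rw [hc b hb]).1 (h.2 hS i hi)⟩

lemma exists_unique (h : IsLeafColouring S c) (hS : S.Nonempty) :
    ∃ i, ∃! b, b ∈ S ∧ c b = i := by
  by_cases h1 : #S = 1
  · obtain ⟨x, rfl⟩ := card_eq_one.1 h1
    exact ⟨c x, x, by simp, fun b hb => by simpa using hb.1⟩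
  · exact ⟨0, h.2 (by have := hS.card_pos; omega) 0 (by decide)⟩

variable [DecidableEq V]

lemma ne_two (h : IsLeafColouring S c) (hS : #S = 2) (hb : b ∈ S) : c b ≠ 2 := by
  intro hb2
  obtain ⟨b₀, ⟨hb₀, h₀⟩, -⟩ := h.2 hS.ge 0 (by decide)
  obtain ⟨b₁, ⟨hb₁, h₁⟩, -⟩ := h.2 hS.ge 1 (by decide)
  have hsub : ({b, b₀, b₁} : Finset V) ⊆ S := by simp [insert_subset_iff, hb, hb₀, hb₁]
  have hthree : #({b, b₀, b₁} : Finset V) = 3 :=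
    card_eq_three.2 ⟨b, b₀, b₁, by grind, by grind, by grind, rfl⟩
  have := card_le_card hsub
  omega

lemma exists_unique_insert (h : IsLeafColouring S c) (hv : v ∉ S) (hv₂ : #S = 1 → c v ≠ 2) :
    ∃ i, ∃! b, b ∈ insert v S ∧ c b = i := by
  rcases Nat.lt_or_ge #S 2 with hS | hS
  · refine ⟨c v, v, by simp, fun b ⟨hb, hcb⟩ => ?_⟩
    rcases mem_insert.1 hb with rfl | hb
    · rfl
    · have h1 : #S = 1 := by have := card_pos.2 ⟨b, hb⟩; omega
      exact absurd (hcb ▸ h.1 h1 b hb) (hv₂ h1)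
  · obtain ⟨i, hi, hiv⟩ : ∃ i : Fin 3, i ≠ 2 ∧ c v ≠ i := by
      by_cases hv0 : c v = 0
      · exact ⟨1, by decide, by simp [hv0]⟩
      · exact ⟨0, by decide, hv0⟩
    obtain ⟨b, hb, huniq⟩ := h.2 hS i hi
    refine ⟨i, b, ⟨mem_insert_of_mem hb.1, hb.2⟩, fun b' ⟨hb', hcb'⟩ => ?_⟩
    rcases mem_insert.1 hb' with rfl | hb'
    · exact absurd hcb' hiv
    · exact huniq b' ⟨hb', hcb'⟩

end IsLeafColouring

lemma exists_isLeafColouring [DecidableEq V] (S : Finset V) : ∃ c, IsLeafColouring S c := by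
  by_cases hS : 2 ≤ #S
  · obtain ⟨x, hx, y, hy, hxy⟩ := one_lt_card.1 hS
    refine ⟨fun b => if b = x then 0 else if b = y then 1 else 2, by omega, fun _ i hi => ?_⟩
    fin_cases i
    · exact ⟨x, by simp [hx], fun b hb => by grind⟩
    · exact ⟨y, by simp [hy, hxy.symm], fun b hb => by grind⟩
    · exact absurd rfl hi
  · exact ⟨fun _ => 2, fun _ _ _ => rfl, fun h => absurd h hS⟩

end LeafColouring

namespace StarForest

variable {V : Type*} {B : Finset V} {m : V → V} {a b u v : V}

def graph (B : Finset V) (m : V → V) : SimpleGraph V :=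
  SimpleGraph.fromRel fun b a => b ∈ B ∧ m b = a

lemma graph_le {G : SimpleGraph V} (h : ∀ b ∈ B, G.Adj b (m b)) : graph B m ≤ G := by
  rintro x y ⟨-, ⟨hx, rfl⟩ | ⟨hy, rfl⟩⟩
  · exact h x hx
  · exact (h y hy).symm

lemma mk_mem_edgeSet_graph (hB : ∀ b ∈ B, m b ∉ B) (hb : b ∈ B) :
    s(b, m b) ∈ (graph B m).edgeSet :=
  (graph B m).mem_edgeSet.2 ⟨fun h => hB b hb (h ▸ hb), Or.inl ⟨hb, rfl⟩⟩

lemma exists_eq_mk_of_mem_edgeSet_graph {f : Sym2 V} (hf : f ∈ (graph B m).edgeSet) :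
    ∃ b ∈ B, f = s(b, m b) := by
  induction f using Sym2.ind with
  | _ x y =>
    obtain ⟨-, ⟨hx, rfl⟩ | ⟨hy, rfl⟩⟩ := (graph B m).mem_edgeSet.1 hf
    · exact ⟨x, hx, rfl⟩
    · exact ⟨y, hy, Sym2.eq_swap⟩

lemma exists_edgeColouring_extending {α : Type*} [Inhabited α] (hB : ∀ b ∈ B, m b ∉ B)
    (κ : V → α) : ∃ c : Sym2 V → α, ∀ b ∈ B, c s(b, m b) = κ b := by
  have hinj : Injective fun b : B => s((b : V), m b) := by
    rintro ⟨b, hb⟩ ⟨b', hb'⟩ h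
    rcases Sym2.eq_iff.1 h with ⟨h, -⟩ | ⟨h, -⟩
    · exact Subtype.ext h
    · exact (hB b' hb' (h ▸ hb)).elim
  exact ⟨extend _ (fun b : B => κ b) default, fun b hb => hinj.extend_apply _ _ ⟨b, hb⟩⟩

variable [DecidableEq V]

def leaves (B : Finset V) (m : V → V) (a : V) : Finset V := {b ∈ B | m b = a}

def singletonCentres [Fintype V] (B : Finset V) (m : V → V) : Finset V :=
  {a | #(leaves B m a) = 1}

@[simp]
lemma mem_leaves : b ∈ leaves B m a ↔ b ∈ B ∧ m b = a := mem_filter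

lemma leaves_update (hv : v ∈ B) (a : V) :
    leaves B (update m v u) a =
      if a = u then insert v (leaves B m a) else (leaves B m a).erase v := by
  ext b
  by_cases hbv : b = v
  · subst hbv
    split_ifs with hau <;> simp [hv, hau, Ne.symm]
  · split_ifs <;> simp [hbv, update_of_ne]

lemma card_singletonCentres_update_lt [Fintype V] (hv : v ∈ B) (hvu : m v ≠ u)
    (hu : #(leaves B m u) = 1) (hmv : #(leaves B m (m v)) ≠ 2) :
    #(singletonCentres B (update m v u)) < #(singletonCentres B m) := by
  have hv_notMem : v ∉ leaves B m u := by simp [hvu]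
  have hcard_u : #(leaves B (update m v u) u) = 2 := by
    rw [leaves_update hv, if_pos rfl, card_insert_of_notMem hv_notMem, hu]
  refine card_lt_card ((ssubset_iff_of_subset fun a ha => ?_).2 ⟨u, ?_, ?_⟩)
  · simp only [singletonCentres, mem_filter, mem_univ, true_and] at ha ⊢
    rw [leaves_update hv] at ha
    split_ifs at ha with hau
    · rw [card_insert_of_notMem (hau ▸ hv_notMem), hau, hu] at ha
      omega
    · by_cases hva : v ∈ leaves B m a
      · obtain rfl : m v = a := (mem_leaves.1 hva).2
        rw [card_erase_of_mem hva] at ha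
        omega
      · rwa [erase_eq_of_notMem hva] at ha
  · simpa [singletonCentres] using hu
  · simp [singletonCentres, hcard_u]

lemma exists_adj_card_leaves_eq_two [Fintype V] {G : SimpleGraph V} (B : Finset V)
    (hG : ∀ x, ∃ y, G.Adj x y) :
    ∃ m : V → V, (∀ x, G.Adj x (m x)) ∧ ∀ ⦃u v⦄, G.Adj u v → v ∈ B → m v ≠ u →
      #(leaves B m u) = 1 → #(leaves B m (m v)) = 2 := by
  choose m₀ hm₀ using hG
  obtain ⟨m, hm, hmin⟩ := Set.exists_min_image {m : V → V | ∀ x, G.Adj x (m x)}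
    (fun m => #(singletonCentres B m)) (Set.toFinite _) ⟨m₀, hm₀⟩
  refine ⟨m, hm, fun u v huv hv hvu hu => by_contra fun hmv => ?_⟩
  have hadj : ∀ x, G.Adj x (update m v u x) := by
    intro x
    rcases eq_or_ne x v with rfl | hx
    · simpa using huv.symm
    · simpa [hx] using hm x
  exact (hmin _ hadj).not_gt (card_singletonCentres_update_lt hv hvu hu hmv)

lemma exists_unique_colour {κ : V → Fin 3} (hleaf : ∀ a, IsLeafColouring (leaves B m a) κ)
    (hv : v ∈ B) (htwo : m v ≠ u → #(leaves B m u) = 1 → #(leaves B m (m v)) = 2) :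
    ∃ i, ∃! b, b ∈ insert v (leaves B m u) ∧ κ b = i := by
  by_cases hvu : m v = u
  · have hvu' : v ∈ leaves B m u := mem_leaves.2 ⟨hv, hvu⟩
    rw [insert_eq_of_mem hvu']
    exact (hleaf u).exists_unique ⟨v, hvu'⟩
  · exact (hleaf u).exists_unique_insert (by simp [hvu]) fun hu =>
      (hleaf (m v)).ne_two (htwo hvu hu) (mem_leaves.2 ⟨hv, rfl⟩)

lemma cfSatisfies_graph {k : ℕ} {c : Sym2 V → Fin k} (hB : ∀ b ∈ B, m b ∉ B) (hu : u ∉ B)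
    (hv : v ∈ B) (h : ∃ i, ∃! b, b ∈ insert v (leaves B m u) ∧ c s(b, m b) = i) :
    CFSatisfies (graph B m) c s(u, v) := by
  obtain ⟨i, b, ⟨hbT, hbi⟩, huniq⟩ := h
  have hbB : b ∈ B := by
    rcases mem_insert.1 hbT with rfl | hb
    exacts [hv, (mem_leaves.1 hb).1]
  refine ⟨i, s(b, m b), ⟨mk_mem_edgeSet_graph hB hbB, ?_, hbi⟩, ?_⟩
  · rcases mem_insert.1 hbT with rfl | hb
    · exact ⟨b, by simp, by simp⟩
    · exact ⟨u, by simp, by simp [(mem_leaves.1 hb).2]⟩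
  · rintro f ⟨hf, ⟨x, hxe, hxf⟩, hfi⟩
    obtain ⟨b', hb', rfl⟩ := exists_eq_mk_of_mem_edgeSet_graph hf
    suffices b' ∈ insert v (leaves B m u) by rw [huniq b' ⟨this, hfi⟩]
    rw [Sym2.mem_iff] at hxe hxf
    rcases hxe with rfl | rfl <;> rcases hxf with rfl | hx
    · exact absurd hb' hu
    · simp [hb', hx]
    · exact mem_insert_self _ _
    · exact absurd (hx ▸ hv) (hB b' hb')

end StarForest

open StarForest

/-- Every finite bipartite simple graph without isolated vertices satisfies `χ'_sCF(G) ≤ 3`. -/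
theorem scfChromIndex_bipartite_le_three {V : Type*} [Fintype V] (G : SimpleGraph V)
    (hBip : G.Colorable 2) (hNoIso : ∀ v : V, ∃ w : V, G.Adj v w) :
    scfChromIndex G ≤ 3 := by
  classical
  obtain ⟨φ⟩ := hBip
  let B : Finset V := {x | φ x = 1}
  have hside : ∀ ⦃x y⦄, G.Adj x y → (x ∈ B ↔ y ∉ B) := fun x y hxy => by
    have := φ.valid hxy
    simp only [B, mem_filter, mem_univ, true_and]
    omega
  obtain ⟨m, hm, htwo⟩ := exists_adj_card_leaves_eq_two B hNoIso
  have hB : ∀ b ∈ B, m b ∉ B := fun b hb => (hside (hm b)).1 hb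
  choose col hcol using exists_isLeafColouring (V := V)
  obtain ⟨c, hc⟩ := exists_edgeColouring_extending hB fun b => col (leaves B m (m b)) b
  have hleaf : ∀ a, IsLeafColouring (leaves B m a) fun b => c s(b, m b) := fun a =>
    (hcol _).congr fun b hb => by rw [hc b (mem_leaves.1 hb).1, (mem_leaves.1 hb).2]
  have hsat : ∀ ⦃u v⦄, G.Adj u v → v ∈ B → CFSatisfies (graph B m) c s(u, v) :=
    fun u v huv hv => cfSatisfies_graph hB (fun hu => (hside huv).1 hu hv) hv
      (exists_unique_colour hleaf hv (htwo huv hv))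
  refine Nat.sInf_le ⟨graph B m, graph_le fun b _ => hm b, c, fun e he => ?_⟩
  induction e using Sym2.ind with
  | _ x y =>
    by_cases hy : y ∈ B
    · exact hsat he hy
    · exact Sym2.eq_swap ▸ hsat (G.adj_symm he) ((hside he).2 hy)
end

section
/- Every finite bipartite simple graph G without isolated vertices satisfies χ'_CF(G) ≤ 4. -/
open SimpleGraph

/-- **Bollobás–Cockayne**: every finite graph without isolated vertices has a dominating set
`D` in which every vertex has an *external private neighbour*: a neighbour outside `D` whose
only neighbour inside `D` is that vertex. -/
lemma exists_good_dominating {V : Type*} [Fintype V] (G : SimpleGraph V)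
    (hNoIso : ∀ v : V, ∃ w : V, G.Adj v w) :
    ∃ D : Finset V, (∀ v : V, v ∉ D → ∃ z ∈ D, G.Adj v z) ∧
      (∀ c ∈ D, ∃ x : V, G.Adj c x ∧ x ∉ D ∧ ∀ w ∈ D, G.Adj x w → w = c) := by
  classical
  set N := Fintype.card V with hN
  set isDom : Finset V → Prop := fun D => ∀ v : V, v ∉ D → ∃ z ∈ D, G.Adj v z with hisDom
  set I : Finset V → Finset V := fun S => S.filter (fun z => ∀ d ∈ S, ¬ G.Adj z d) with hI
  set m : Finset V → ℕ := fun D => D.card * (N + 1) + (I D).card with hm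
  have hSne : ((Finset.univ : Finset (Finset V)).filter isDom).Nonempty := by
    refine ⟨Finset.univ, Finset.mem_filter.mpr ⟨Finset.mem_univ _, ?_⟩⟩
    intro v hv
    exact absurd (Finset.mem_univ v) hv
  obtain ⟨D, hDS, hmin⟩ := Finset.exists_min_image _ m hSne
  have hdom : isDom D := (Finset.mem_filter.mp hDS).2
  refine ⟨D, hdom, ?_⟩
  intro cc hcc
  by_contra hno
  push_neg at hno
  -- hno : ∀ x, G.Adj cc x → x ∉ D → ∃ w ∈ D, G.Adj x w ∧ w ≠ cc
  have hcard_le : D.card ≤ N := by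
    rw [hN, ← Finset.card_univ]
    exact Finset.card_le_univ D
  have hccD : 1 ≤ D.card := Finset.card_pos.mpr ⟨cc, hcc⟩
  by_cases hiso : ∃ d ∈ D, G.Adj cc d
  · -- case (a): cc has a neighbour inside D; then D.erase cc is dominating, smaller
    obtain ⟨d, hdD, hdadj⟩ := hiso
    have hdom' : isDom (D.erase cc) := by
      intro v hv
      by_cases hvc : v = cc
      · subst hvc
        exact ⟨d, Finset.mem_erase.mpr ⟨(G.ne_of_adj hdadj).symm, hdD⟩, hdadj⟩
      · have hvD : v ∉ D := by
          intro hvD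
          exact hv (Finset.mem_erase.mpr ⟨hvc, hvD⟩)
        obtain ⟨z, hzD, hzadj⟩ := hdom v hvD
        by_cases hzc : z = cc
        · subst hzc
          obtain ⟨w, hwD, hwadj, hwne⟩ := hno v hzadj.symm hvD
          exact ⟨w, Finset.mem_erase.mpr ⟨hwne, hwD⟩, hwadj⟩
        · exact ⟨z, Finset.mem_erase.mpr ⟨hzc, hzD⟩, hzadj⟩
    have hmem' : D.erase cc ∈ (Finset.univ : Finset (Finset V)).filter isDom :=
      Finset.mem_filter.mpr ⟨Finset.mem_univ _, hdom'⟩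
    have hle := hmin _ hmem'
    have hcarde : (D.erase cc).card = D.card - 1 := Finset.card_erase_of_mem hcc
    have hIle : (I (D.erase cc)).card ≤ (D.erase cc).card := Finset.card_filter_le _ _
    have hcarde_le : (D.erase cc).card ≤ N := by
      rw [hN, ← Finset.card_univ]
      exact Finset.card_le_univ _
    have hlt : m (D.erase cc) < m D := by
      have h1 : m (D.erase cc) ≤ (D.erase cc).card * (N + 1) + N := by
        simp only [hm]
        omega
      have h2 : (D.erase cc).card * (N + 1) + N < ((D.erase cc).card + 1) * (N + 1) := by
        ring_nf
        omega
      have h3 : ((D.erase cc).card + 1) * (N + 1) = D.card * (N + 1) := by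
        rw [hcarde]
        congr 1
        omega
      have h4 : D.card * (N + 1) ≤ m D := by
        simp only [hm]
        omega
      omega
    omega
  · -- case (b): cc has no neighbour inside D
    push_neg at hiso
    obtain ⟨x₀, hadj⟩ := hNoIso cc
    have hx₀D : x₀ ∉ D := fun h => hiso x₀ h hadj
    obtain ⟨d', hd'D, hd'adj, hd'ne⟩ := hno x₀ hadj hx₀D
    set D' : Finset V := insert x₀ (D.erase cc) with hD'
    have hccx₀ : cc ≠ x₀ := G.ne_of_adj hadj
    have hx₀e : x₀ ∉ D.erase cc := fun h => hx₀D (Finset.mem_erase.mp h).2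
    have hccD' : cc ∉ D' := by
      simp only [hD', Finset.mem_insert, Finset.mem_erase]
      push_neg
      exact ⟨hccx₀, fun h => absurd rfl h⟩
    have hdom' : isDom D' := by
      intro v hv
      by_cases hvc : v = cc
      · subst hvc
        exact ⟨x₀, Finset.mem_insert_self _ _, hadj⟩
      · have hvD : v ∉ D := by
          intro hvD
          exact hv (Finset.mem_insert_of_mem (Finset.mem_erase.mpr ⟨hvc, hvD⟩))
        obtain ⟨z, hzD, hzadj⟩ := hdom v hvD
        by_cases hzc : z = cc
        · subst hzc
          obtain ⟨w, hwD, hwadj, hwne⟩ := hno v hzadj.symm hvD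
          exact ⟨w, Finset.mem_insert_of_mem (Finset.mem_erase.mpr ⟨hwne, hwD⟩), hwadj⟩
        · exact ⟨z, Finset.mem_insert_of_mem (Finset.mem_erase.mpr ⟨hzc, hzD⟩), hzadj⟩
    have hmem' : D' ∈ (Finset.univ : Finset (Finset V)).filter isDom :=
      Finset.mem_filter.mpr ⟨Finset.mem_univ _, hdom'⟩
    have hle := hmin _ hmem'
    have hcard' : D'.card = D.card := by
      rw [hD', Finset.card_insert_of_notMem hx₀e, Finset.card_erase_of_mem hcc]
      omega
    -- cc is isolated in D
    have hccI : cc ∈ I D := by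
      simp only [hI, Finset.mem_filter]
      exact ⟨hcc, fun d hd hadj' => hiso d hd hadj'⟩
    -- I D' ⊆ (I D).erase cc
    have hsub : I D' ⊆ (I D).erase cc := by
      intro z hz
      simp only [hI, Finset.mem_filter] at hz
      obtain ⟨hzD', hziso⟩ := hz
      have hd'D' : d' ∈ D' :=
        Finset.mem_insert_of_mem (Finset.mem_erase.mpr ⟨hd'ne, hd'D⟩)
      have hzx₀ : z ≠ x₀ := by
        intro h
        subst h
        exact hziso d' hd'D' hd'adj
      have hze : z ∈ D.erase cc := by
        rcases Finset.mem_insert.mp hzD' with h | h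
        · exact absurd h hzx₀
        · exact h
      have hzcc : z ≠ cc := (Finset.mem_erase.mp hze).1
      have hzD : z ∈ D := (Finset.mem_erase.mp hze).2
      refine Finset.mem_erase.mpr ⟨hzcc, ?_⟩
      simp only [hI, Finset.mem_filter]
      refine ⟨hzD, ?_⟩
      intro d hd
      by_cases hdc : d = cc
      · subst hdc
        intro hadj'
        exact hiso z hzD hadj'.symm
      · exact hziso d (Finset.mem_insert_of_mem (Finset.mem_erase.mpr ⟨hdc, hd⟩))
    have hIlt : (I D').card < (I D).card := by
      have h1 : (I D').card ≤ ((I D).erase cc).card := Finset.card_le_card hsub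
      have h2 : ((I D).erase cc).card = (I D).card - 1 := Finset.card_erase_of_mem hccI
      have h3 : 1 ≤ (I D).card := Finset.card_pos.mpr ⟨cc, hccI⟩
      omega
    have hlt : m D' < m D := by
      simp only [hm, hcard']
      omega
    omega

/-- Every finite bipartite simple graph without isolated vertices satisfies `χ'_CF(G) ≤ 4`. -/
theorem cfChromIndex_bipartite_le_four {V : Type*} [Fintype V] (G : SimpleGraph V)
    (hBip : G.Colorable 2) (hNoIso : ∀ v : V, ∃ w : V, G.Adj v w) :
    cfChromIndex G ≤ 4 := by
  classical
  obtain ⟨CC⟩ := hBip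
  obtain ⟨D, hdom, hepn⟩ := exists_good_dominating G hNoIso
  -- For every vertex not in D, choose an adjacent vertex of D.
  have hσex : ∀ x : V, ∃ z : V, x ∉ D → (z ∈ D ∧ G.Adj x z) := by
    intro x
    by_cases hx : x ∈ D
    · exact ⟨x, fun h => absurd hx h⟩
    · obtain ⟨z, hz, ha⟩ := hdom x hx
      exact ⟨z, fun _ => ⟨hz, ha⟩⟩
  choose σ hσ using hσex
  -- For every vertex of D, choose an external private neighbour.
  have hspex : ∀ z : V, ∃ x : V,
      z ∈ D → (G.Adj z x ∧ x ∉ D ∧ ∀ w ∈ D, G.Adj x w → w = z) := by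
    intro z
    by_cases hz : z ∈ D
    · obtain ⟨x, h1, h2, h3⟩ := hepn z hz
      exact ⟨x, fun _ => ⟨h1, h2, h3⟩⟩
    · exact ⟨z, fun h => absurd h hz⟩
  choose sp hsp using hspex
  -- the three distinguished classes of edges
  set P1 : Sym2 V → Prop := fun f => ∃ z, z ∈ D ∧ f = s(z, sp z) ∧ CC z = 0 with hP1def
  set P2 : Sym2 V → Prop := fun f => ∃ z, z ∈ D ∧ f = s(z, sp z) with hP2def
  set P3 : Sym2 V → Prop := fun f =>
    ∃ z ℓ, z ∈ D ∧ ℓ ∉ D ∧ f = s(z, ℓ) ∧ σ ℓ = z ∧ ℓ ≠ sp z ∧ CC z = 1 with hP3def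
  set c : Sym2 V → Fin 4 := fun f =>
    if P1 f then 1 else if P2 f then 2 else if P3 f then 3 else 0 with hcdef
  have hfin2 : ∀ a : Fin 2, a = 0 ∨ a = 1 := by decide
  -- Satisfaction when one endpoint is in D.
  have satA : ∀ u v : V, G.Adj u v → u ∈ D → CFSatisfies G c s(u, v) := by
    intro u v huv hu
    obtain ⟨hadjsp, hspD, hpriv⟩ := hsp u hu
    -- common uniqueness core
    have key : ∀ f' : Sym2 V, (∃ x ∈ s(u, v), x ∈ f') →
        ∀ z, z ∈ D → f' = s(z, sp z) → CC z = CC u → f' = s(u, sp u) := by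
      intro f' hmeets z hzD hfeq hcol
      obtain ⟨hadjz, hspzD, hprivz⟩ := hsp z hzD
      obtain ⟨x, hxe, hxf⟩ := hmeets
      rw [hfeq] at hxf
      rw [Sym2.mem_iff] at hxe hxf
      rcases hxe with hxu | hxv
      · rcases hxf with hxz | hxsp
        · -- u = z
          have h : z = u := by rw [← hxz, hxu]
          rw [hfeq, h]
        · -- u = sp z : colour contradiction
          exfalso
          apply CC.valid hadjz
          have h : CC (sp z) = CC u := by rw [← hxsp, hxu]
          rw [h, hcol]
      · rcases hxf with hxz | hxsp
        · -- v = z : colour contradiction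
          exfalso
          apply CC.valid huv
          have h : CC v = CC z := by rw [← hxv, hxz]
          rw [h, hcol]
        · -- v = sp z : privacy forces z = u
          have h : v = sp z := by rw [← hxv, hxsp]
          have h2 : u = z := hprivz u hu (by rw [← h]; exact huv.symm)
          rw [hfeq, ← h2]
    by_cases hc0 : CC u = 0
    · -- colour 1
      refine ⟨1, s(u, sp u), ⟨?_, ⟨u, ?_, ?_⟩, ?_⟩, ?_⟩
      · exact (G.mem_edgeSet).mpr hadjsp
      · simp
      · simp
      · -- c value
        have hP1 : P1 s(u, sp u) := ⟨u, hu, rfl, hc0⟩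
        simp only [hcdef]
        rw [if_pos hP1]
      · rintro f' ⟨hf'E, hmeets, hf'c⟩
        simp only [hcdef] at hf'c
        split_ifs at hf'c with h1 h2 h3
        · obtain ⟨z, hzD, hfeq, hz0⟩ := h1
          exact key f' hmeets z hzD hfeq (by rw [hz0, hc0])
        · exact absurd hf'c (by decide)
        · exact absurd hf'c (by decide)
        · exact absurd hf'c (by decide)
    · -- colour 2
      have hc1' : CC u = 1 := (hfin2 (CC u)).resolve_left hc0
      have hnP1 : ¬ P1 s(u, sp u) := by
        rintro ⟨z, hzD, heq, hz0⟩
        rcases Sym2.eq_iff.mp heq with ⟨h1, h2⟩ | ⟨h1, h2⟩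
        · rw [← h1] at hz0
          exact hc0 hz0
        · rw [← h2] at hzD
          exact hspD hzD
      refine ⟨2, s(u, sp u), ⟨?_, ⟨u, ?_, ?_⟩, ?_⟩, ?_⟩
      · exact (G.mem_edgeSet).mpr hadjsp
      · simp
      · simp
      · have hP2 : P2 s(u, sp u) := ⟨u, hu, rfl⟩
        simp only [hcdef]
        rw [if_neg hnP1, if_pos hP2]
      · rintro f' ⟨hf'E, hmeets, hf'c⟩
        simp only [hcdef] at hf'c
        split_ifs at hf'c with h1 h2 h3
        · exact absurd hf'c (by decide)
        · obtain ⟨z, hzD, hfeq⟩ := h2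
          have hz1 : CC z = 1 := by
            rcases hfin2 (CC z) with h | h
            · exact absurd ⟨z, hzD, hfeq, h⟩ h1
            · exact h
          exact key f' hmeets z hzD hfeq (by rw [hz1, hc1'])
        · exact absurd hf'c (by decide)
        · exact absurd hf'c (by decide)
  -- Satisfaction when neither endpoint is in D; wlog CC u = 0.
  have satB : ∀ u v : V, G.Adj u v → u ∉ D → v ∉ D → CC u = 0 →
      CFSatisfies G c s(u, v) := by
    intro u v huv hu hv hcu
    have hcv : CC v = 1 := by
      rcases hfin2 (CC v) with h | h
      · exact absurd (h ▸ hcu ▸ rfl : CC u = CC v) (CC.valid huv)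
      · exact h
    by_cases hvsp : ∃ z, z ∈ D ∧ sp z = v
    · -- v is a private neighbour of some centre z (colour of z is 0): colour 1
      obtain ⟨z, hzD, hzv⟩ := hvsp
      obtain ⟨hadjz, hspzD, hprivz⟩ := hsp z hzD
      have hadjzv : G.Adj z v := by rw [← hzv]; exact hadjz
      have hz0 : CC z = 0 := by
        rcases hfin2 (CC z) with h | h
        · exact h
        · exact absurd (h ▸ hcv ▸ rfl : CC z = CC v) (CC.valid hadjzv)
      refine ⟨1, s(z, sp z), ⟨?_, ⟨v, ?_, ?_⟩, ?_⟩, ?_⟩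
      · exact (G.mem_edgeSet).mpr hadjz
      · simp
      · rw [hzv]; simp
      · have hP1 : P1 s(z, sp z) := ⟨z, hzD, rfl, hz0⟩
        simp only [hcdef]
        rw [if_pos hP1]
      · rintro f' ⟨hf'E, ⟨x, hxe, hxf⟩, hf'c⟩
        simp only [hcdef] at hf'c
        split_ifs at hf'c with h1 h2 h3
        · obtain ⟨z', hz'D, hfeq, hz'0⟩ := h1
          obtain ⟨hadjz', hspz'D, hprivz'⟩ := hsp z' hz'D
          rw [hfeq] at hxf
          rw [Sym2.mem_iff] at hxe hxf
          rcases hxe with hxu | hxv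
          · rcases hxf with hxz | hxsp
            · have h : z' = u := by rw [← hxz, hxu]
              exact absurd (h ▸ hz'D) hu
            · exfalso
              apply CC.valid hadjz'
              have h : CC (sp z') = CC u := by rw [← hxsp, hxu]
              rw [h, hcu, hz'0]
          · rcases hxf with hxz | hxsp
            · have h : z' = v := by rw [← hxz, hxv]
              exact absurd (h ▸ hz'D) hv
            · have h : v = sp z' := by rw [← hxv, hxsp]
              have h2 : z = z' := hprivz' z hzD (by rw [← h]; exact hadjzv.symm)
              rw [hfeq, ← h2]
        · exact absurd hf'c (by decide)
        · exact absurd hf'c (by decide)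
        · exact absurd hf'c (by decide)
    · by_cases husp : ∃ z, z ∈ D ∧ sp z = u
      · -- u is a private neighbour of some centre z (colour of z is 1): colour 2
        obtain ⟨z, hzD, hzu⟩ := husp
        obtain ⟨hadjz, hspzD, hprivz⟩ := hsp z hzD
        have hadjzu : G.Adj z u := by rw [← hzu]; exact hadjz
        have hz1 : CC z = 1 := by
          rcases hfin2 (CC z) with h | h
          · exact absurd (h ▸ hcu ▸ rfl : CC z = CC u) (CC.valid hadjzu)
          · exact h
        have hnP1 : ¬ P1 s(z, sp z) := by
          rintro ⟨z'', hz''D, heq, hz''0⟩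
          rcases Sym2.eq_iff.mp heq with ⟨h1, h2⟩ | ⟨h1, h2⟩
          · rw [← h1] at hz''0
            rw [hz1] at hz''0
            exact absurd hz''0 (by decide)
          · rw [← h2] at hz''D
            exact hspzD hz''D
        refine ⟨2, s(z, sp z), ⟨?_, ⟨u, ?_, ?_⟩, ?_⟩, ?_⟩
        · exact (G.mem_edgeSet).mpr hadjz
        · simp
        · rw [hzu]; simp
        · have hP2 : P2 s(z, sp z) := ⟨z, hzD, rfl⟩
          simp only [hcdef]
          rw [if_neg hnP1, if_pos hP2]
        · rintro f' ⟨hf'E, ⟨x, hxe, hxf⟩, hf'c⟩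
          simp only [hcdef] at hf'c
          split_ifs at hf'c with h1 h2 h3
          · exact absurd hf'c (by decide)
          · obtain ⟨z', hz'D, hfeq⟩ := h2
            have hz'1 : CC z' = 1 := by
              rcases hfin2 (CC z') with h | h
              · exact absurd ⟨z', hz'D, hfeq, h⟩ h1
              · exact h
            obtain ⟨hadjz', hspz'D, hprivz'⟩ := hsp z' hz'D
            rw [hfeq] at hxf
            rw [Sym2.mem_iff] at hxe hxf
            rcases hxe with hxu | hxv
            · rcases hxf with hxz | hxsp
              · have h : z' = u := by rw [← hxz, hxu]
                exact absurd (h ▸ hz'D) hu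
              · have h : u = sp z' := by rw [← hxu, hxsp]
                have h2 : z = z' := hprivz' z hzD (by rw [← h]; exact hadjzu.symm)
                rw [hfeq, ← h2]
            · rcases hxf with hxz | hxsp
              · have h : z' = v := by rw [← hxz, hxv]
                exact absurd (h ▸ hz'D) hv
              · exfalso
                apply CC.valid hadjz'
                have h : CC (sp z') = CC v := by rw [← hxsp, hxv]
                rw [h, hcv, hz'1]
          · exact absurd hf'c (by decide)
          · exact absurd hf'c (by decide)
      · -- neither endpoint special: colour 3 via the star edge of u
        obtain ⟨hσuD, hadjσu⟩ := hσ u hu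
        have hσu1 : CC (σ u) = 1 := by
          rcases hfin2 (CC (σ u)) with h | h
          · exact absurd (h ▸ hcu ▸ rfl : CC (σ u) = CC u) (CC.valid hadjσu.symm)
          · exact h
        have hune : u ≠ sp (σ u) := by
          intro h
          exact husp ⟨σ u, hσuD, h.symm⟩
        have hP3 : P3 s(σ u, u) := ⟨σ u, u, hσuD, hu, rfl, rfl, hune, hσu1⟩
        have hnP2 : ¬ P2 s(σ u, u) := by
          rintro ⟨z'', hz''D, heq⟩
          rcases Sym2.eq_iff.mp heq with ⟨h1, h2⟩ | ⟨h1, h2⟩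
          · exact husp ⟨z'', hz''D, h2.symm⟩
          · exact hu (h2 ▸ hz''D)
        have hnP1 : ¬ P1 s(σ u, u) := by
          rintro ⟨z'', hz''D, heq, _⟩
          exact hnP2 ⟨z'', hz''D, heq⟩
        refine ⟨3, s(σ u, u), ⟨?_, ⟨u, ?_, ?_⟩, ?_⟩, ?_⟩
        · exact (G.mem_edgeSet).mpr hadjσu.symm
        · simp
        · simp
        · simp only [hcdef]
          rw [if_neg hnP1, if_neg hnP2, if_pos hP3]
        · rintro f' ⟨hf'E, ⟨x, hxe, hxf⟩, hf'c⟩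
          simp only [hcdef] at hf'c
          split_ifs at hf'c with h1 h2 h3
          · exact absurd hf'c (by decide)
          · exact absurd hf'c (by decide)
          · obtain ⟨z', ℓ', hz'D, hℓ'D, hfeq, hσℓ', hℓ'ne, hz'1⟩ := h3
            rw [hfeq] at hxf
            rw [Sym2.mem_iff] at hxe hxf
            rcases hxe with hxu | hxv
            · rcases hxf with hxz | hxℓ
              · have h : z' = u := by rw [← hxz, hxu]
                exact absurd (h ▸ hz'D) hu
              · -- u = ℓ'
                have h : ℓ' = u := by rw [← hxℓ, hxu]
                have h2 : z' = σ u := by rw [← hσℓ', h]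
                rw [hfeq, h, h2]
            · rcases hxf with hxz | hxℓ
              · have h : z' = v := by rw [← hxz, hxv]
                exact absurd (h ▸ hz'D) hv
              · -- v = ℓ' : colour contradiction
                exfalso
                have hadj' : G.Adj ℓ' z' := by
                  rw [← hσℓ']
                  exact (hσ ℓ' hℓ'D).2
                apply CC.valid hadj'
                have h : ℓ' = v := by rw [← hxℓ, hxv]
                rw [h, hcv, hz'1]
          · exact absurd hf'c (by decide)
  -- assemble
  have hsat : ∀ e ∈ G.edgeSet, CFSatisfies G c e := by
    intro e he
    induction e using Sym2.ind with
    | _ u v =>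
    rw [mem_edgeSet] at he
    by_cases hu : u ∈ D
    · exact satA u v he hu
    by_cases hv : v ∈ D
    · have := satA v u he.symm hv
      rwa [Sym2.eq_swap] at this
    by_cases hcu : CC u = 0
    · exact satB u v he hu hv hcu
    · have hcv : CC v = 0 := by
        rcases hfin2 (CC v) with h | h
        · exact h
        · have hcu1 : CC u = 1 := (hfin2 (CC u)).resolve_left hcu
          exact absurd (hcu1 ▸ h ▸ rfl : CC u = CC v) (CC.valid he)
      have := satB v u he.symm hv hu hcv
      rwa [Sym2.eq_swap] at this
  exact Nat.sInf_le ⟨c, hsat⟩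
end

section
/- Every finite nonempty simple graph G without isolated vertices satisfies χ'_sCF(G) ≤ 3⌈log₂ χ(G)⌉, where χ(G) denotes the chromatic number of G. -/
open SimpleGraph

/-!
Properly colour `G` with `2 ^ t` colours, `t = ⌈log₂ χ(G)⌉`, and read the colours as `t`-bit
strings. An edge has *level* `i` if `i` is the highest bit in which the colours of its ends differ;
bit `i` two-colours the edges of level `i`, so `G` splits into `t` edge-disjoint bipartite graphs.
Edge-disjoint pieces can use disjoint palettes, so it suffices to handle a bipartite graph with
three colours.

There, every leaf (a vertex on side `1` with a neighbour) picks a neighbour as its center, and the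
chosen edges form a star forest. In a star with at least two leaves, two leaves get labels `0` and
`1` and the others `2`; a one-leaf star gets `2`. An edge `ab` with `b` a leaf sees only the star
of `a` and the edge from `b` to its center: either a label occurring once in the star of `a` is
free, or the star of `a` is a singleton and the edge of `b` is labelled `2` as well. Choosing the
centers to minimise the number of one-leaf stars rules out the last case, since moving `b` into the
star of `a` would remove a singleton without creating one.
-/

section Decomposition

variable {V : Type*}

open Function

def HasSCFColoring (G : SimpleGraph V) (k : ℕ) : Prop :=
  ∃ H : SimpleGraph V, H ≤ G ∧
    ∃ c : Sym2 V → Fin k, ∀ e ∈ G.edgeSet, CFSatisfies H c e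

theorem scfChromIndex_le_s9 {G : SimpleGraph V} {k : ℕ} (h : HasSCFColoring G k) :
    scfChromIndex G ≤ k :=
  Nat.sInf_le h

theorem CFSatisfies.of_le {k m : ℕ} {F H : SimpleGraph V} {c : Sym2 V → Fin k}
    {d : Sym2 V → Fin m} {g : Fin k → Fin m} (hFH : F ≤ H)
    (hd : ∀ f ∈ H.edgeSet, ∀ col, d f = g col ↔ f ∈ F.edgeSet ∧ c f = col) {e : Sym2 V}
    (he : CFSatisfies F c e) : CFSatisfies H d e := by
  obtain ⟨col, f, ⟨hfF, hinc, hcol⟩, huniq⟩ := he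
  have hfH := edgeSet_mono hFH hfF
  refine ⟨g col, f, ⟨hfH, hinc, (hd f hfH col).2 ⟨hfF, hcol⟩⟩, ?_⟩
  rintro f' ⟨hf'H, hinc', hcol'⟩
  obtain ⟨hf'F, hcf'⟩ := (hd f' hf'H col).1 hcol'
  exact huniq f' ⟨hf'F, hinc', hcf'⟩

theorem HasSCFColoring.iSup {ι : Type*} [Fintype ι] [Nonempty ι] {K : ι → SimpleGraph V}
    {k : ℕ} (hK : Pairwise (Disjoint on K)) (h : ∀ i, HasSCFColoring (K i) k) :
    HasSCFColoring (⨆ i, K i) (Fintype.card ι * k) := by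
  classical
  choose F hFK c hc using h
  let enc : ι × Fin k ≃ Fin (Fintype.card ι * k) :=
    ((Fintype.equivFin ι).prodCongr (Equiv.refl _)).trans finProdFinEquiv
  -- an edge of `F i` gets colour `(i, c i f)`; disjointness makes `i` unique
  let idx : Sym2 V → ι := fun f =>
    if h : ∃ i, f ∈ (F i).edgeSet then h.choose else Classical.arbitrary ι
  have idx_eq {f : Sym2 V} {i : ι} (hf : f ∈ (F i).edgeSet) : idx f = i := by
    have h : ∃ i, f ∈ (F i).edgeSet := ⟨i, hf⟩
    simp only [idx, dif_pos h]
    by_contra hne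
    exact Set.disjoint_left.1 (disjoint_edgeSet.2 (hK hne))
      (edgeSet_mono (hFK _) h.choose_spec) (edgeSet_mono (hFK i) hf)
  refine ⟨⨆ i, F i, iSup_mono hFK, fun f => enc (idx f, c (idx f) f), fun e he => ?_⟩
  obtain ⟨i, hi⟩ := Set.mem_iUnion.1 (edgeSet_iSup ▸ he)
  refine (hc i e hi).of_le (g := fun col => enc (i, col)) (le_iSup F i) fun f hf col => ?_
  obtain ⟨j, hj⟩ := Set.mem_iUnion.1 (edgeSet_iSup ▸ hf)
  rw [idx_eq hj, enc.apply_eq_iff_eq, Prod.mk.injEq]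
  constructor
  · rintro ⟨rfl, hcol⟩
    exact ⟨hj, hcol⟩
  · rintro ⟨hfi, hcol⟩
    obtain rfl : j = i := (idx_eq hj).symm.trans (idx_eq hfi)
    exact ⟨rfl, hcol⟩

end Decomposition

section StarLabel

variable {V : Type*}

theorem exists_starLabel (P : Finset V) :
    ∃ ℓ : V → Fin 3, (P.card ≤ 1 → ∀ w, ℓ w = 2) ∧
      (2 ≤ P.card → ∀ r ≠ 2, ∃! w, w ∈ P ∧ ℓ w = r) := by
  classical
  by_cases hP : P.card ≤ 1
  · exact ⟨fun _ => 2, fun _ _ => rfl, fun h => absurd h (by omega)⟩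
  obtain ⟨x, hx, y, hy, hxy⟩ := Finset.one_lt_card.1 (show 1 < P.card by omega)
  refine ⟨fun w => if w = x then 0 else if w = y then 1 else 2, fun h => absurd h hP,
    fun _ r hr => ?_⟩
  fin_cases r
  · exact ⟨x, by simp [hx], fun w ⟨_, hw⟩ => by
      dsimp only at hw; split_ifs at hw <;> first | assumption | exact absurd hw (by decide)⟩
  · exact ⟨y, by simp [hy, hxy.symm], fun w ⟨_, hw⟩ => by
      dsimp only at hw; split_ifs at hw <;> first | assumption | exact absurd hw (by decide)⟩
  · exact absurd rfl hr

noncomputable def starLabel (P : Finset V) : V → Fin 3 :=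
  (exists_starLabel P).choose

theorem starLabel_of_card_le_one {P : Finset V} (hP : P.card ≤ 1) (w : V) :
    starLabel P w = 2 :=
  (exists_starLabel P).choose_spec.1 hP w

theorem existsUnique_starLabel {P : Finset V} (hP : 2 ≤ P.card) {r : Fin 3} (hr : r ≠ 2) :
    ∃! w, w ∈ P ∧ starLabel P w = r :=
  (exists_starLabel P).choose_spec.2 hP r hr

theorem starLabel_ne_two_of_card_eq_two {P : Finset V} (hP : P.card = 2) {w : V}
    (hw : w ∈ P) : starLabel P w ≠ 2 := by
  intro h2
  obtain ⟨w₀, ⟨hw₀, h0⟩, -⟩ := existsUnique_starLabel hP.ge (r := 0) (by decide)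
  obtain ⟨w₁, ⟨hw₁, h1⟩, -⟩ := existsUnique_starLabel hP.ge (r := 1) (by decide)
  have : 2 < P.card := Finset.two_lt_card.2
    ⟨w₀, hw₀, w₁, hw₁, w, hw, by rintro rfl; simp_all, by rintro rfl; simp_all,
      by rintro rfl; simp_all⟩
  omega

end StarLabel

namespace SimpleGraph.Coloring

variable {V : Type*} {K : SimpleGraph V} (C : K.Coloring (Fin 2))

def IsCenterChoice (p : V → V) : Prop :=
  ∀ ⦃a b⦄, K.Adj a b → C b = 1 → K.Adj (p b) b

section Centers

variable {C} {p : V → V} {a b : V}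

theorem exists_isCenterChoice : ∃ p, C.IsCenterChoice p := by
  classical
  refine ⟨fun b => if h : ∃ a, K.Adj a b then h.choose else b, fun a b hab _ => ?_⟩
  have h : ∃ a, K.Adj a b := ⟨a, hab⟩
  simpa only [dif_pos h] using h.choose_spec

theorem IsCenterChoice.update [DecidableEq V] (hp : C.IsCenterChoice p) (hab : K.Adj a b) :
    C.IsCenterChoice (Function.update p b a) := by
  intro a' b' hab' hb'
  by_cases h : b' = b
  · subst h
    simpa using hab
  · simpa [h] using hp hab' hb'

end Centers

variable [Fintype V]

open Classical in
noncomputable def petals (p : V → V) (z : V) : Finset V :=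
  {b | C b = 1 ∧ K.Adj z b ∧ p b = z}

def starForest (p : V → V) : SimpleGraph V :=
  fromRel fun z b => b ∈ C.petals p z

open Classical in
noncomputable def starColoring (p : V → V) (f : Sym2 V) : Fin 3 :=
  if h : ∃ b ∈ f, C b = 1 then starLabel (C.petals p (p h.choose)) h.choose else 0

open Classical Finset in
noncomputable def singletonCount (p : V → V) : ℕ :=
  #{z | (C.petals p z).card = 1}

variable {C} {p : V → V} {a b z w : V}

theorem mem_petals : w ∈ C.petals p z ↔ C w = 1 ∧ K.Adj z w ∧ p w = z := by
  simp [petals]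

theorem IsCenterChoice.self_mem_petals (hp : C.IsCenterChoice p) (hab : K.Adj a b) (hb : C b = 1) :
    b ∈ C.petals p (p b) :=
  mem_petals.2 ⟨hb, hp hab hb, rfl⟩

theorem starForest_adj {u v : V} :
    (C.starForest p).Adj u v ↔ u ≠ v ∧ (v ∈ C.petals p u ∨ u ∈ C.petals p v) :=
  fromRel_adj _ u v

theorem starForest_le : C.starForest p ≤ K := by
  intro u v huv
  rcases starForest_adj.1 huv with ⟨-, h | h⟩
  exacts [(mem_petals.1 h).2.1, (mem_petals.1 h).2.1.symm]

theorem mk_mem_starForest_edgeSet (hw : w ∈ C.petals p z) :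
    s(z, w) ∈ (C.starForest p).edgeSet :=
  starForest_adj.2 ⟨(mem_petals.1 hw).2.1.ne, Or.inl hw⟩

theorem starColoring_mk (hw : w ∈ C.petals p z) :
    C.starColoring p s(z, w) = starLabel (C.petals p z) w := by
  obtain ⟨hw1, hzw, rfl⟩ := mem_petals.1 hw
  have h : ∃ b ∈ s(p w, w), C b = 1 := ⟨w, Sym2.mem_mk_right _ _, hw1⟩
  obtain ⟨hmem, hC⟩ := h.choose_spec
  have hchoose : h.choose = w := by
    rcases Sym2.mem_iff.1 hmem with h' | h'
    · exact absurd (h' ▸ hC) (hw1 ▸ C.valid hzw)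
    · exact h'
  rw [starColoring, dif_pos h, hchoose]

theorem starForest_incident (hab : K.Adj a b) (hb : C b = 1) {f : Sym2 V}
    (hf : f ∈ (C.starForest p).edgeSet) (hinc : ∃ x ∈ s(a, b), x ∈ f) :
    (∃ w ∈ C.petals p a, f = s(a, w)) ∨ f = s(p b, b) := by
  obtain ⟨x, hxab, hxf⟩ := hinc
  obtain ⟨z, w, hw, rfl⟩ : ∃ z w, w ∈ C.petals p z ∧ f = s(z, w) := by
    induction f using Sym2.ind with
    | _ u v =>
      rcases starForest_adj.1 hf with ⟨-, h | h⟩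
      exacts [⟨u, v, h, rfl⟩, ⟨v, u, h, Sym2.eq_swap⟩]
  obtain ⟨hw1, hzw, rfl⟩ := mem_petals.1 hw
  rcases Sym2.mem_iff.1 hxab with rfl | rfl <;> rcases Sym2.mem_iff.1 hxf with h | h
  · exact Or.inl ⟨w, h ▸ hw, h ▸ rfl⟩
  · exact absurd (h ▸ hw1) (hb ▸ C.valid hab)
  · exact absurd (h ▸ hb) (hw1 ▸ C.valid hzw)
  · exact Or.inr (h ▸ rfl)

theorem mem_petals_update [DecidableEq V] (hab : K.Adj a b) (hb : C b = 1) :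
    w ∈ C.petals (Function.update p b a) z ↔
      w ≠ b ∧ w ∈ C.petals p z ∨ w = b ∧ z = a := by
  by_cases h : w = b
  · subst h
    simp only [mem_petals, Function.update_self, hb, true_and, ne_eq, not_true_eq_false,
      false_and, false_or, eq_comm (a := a)]
    exact ⟨fun h => h.2, fun h => ⟨h ▸ hab, h⟩⟩
  · simp [mem_petals, h]

/-- Moving the leaf `b` into the one-leaf star of `a` destroys that singleton star; the old star
of `b` becomes a singleton only if it had two leaves. -/
theorem singletonCount_update_lt [DecidableEq V] (hp : C.IsCenterChoice p) (hab : K.Adj a b)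
    (hb : C b = 1) (hba : p b ≠ a) (ha : (C.petals p a).card = 1)
    (hz : (C.petals p (p b)).card ≠ 2) :
    C.singletonCount (Function.update p b a) < C.singletonCount p := by
  set q := Function.update p b a
  have hbz := hp.self_mem_petals hab hb
  have hPa : C.petals q a = insert b (C.petals p a) := by
    ext w
    rw [mem_petals_update hab hb, Finset.mem_insert]
    by_cases h : w = b <;> simp [h]
  have hPz : C.petals q (p b) = (C.petals p (p b)).erase b := by
    ext w
    rw [mem_petals_update hab hb, Finset.mem_erase]
    simp [hba]
  have hP : ∀ z, z ≠ a → z ≠ p b → C.petals q z = C.petals p z := by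
    intro z hza hzb
    ext w
    rw [mem_petals_update hab hb]
    constructor
    · rintro (⟨-, h⟩ | ⟨-, rfl⟩)
      exacts [h, absurd rfl hza]
    · intro h
      refine Or.inl ⟨?_, h⟩
      rintro rfl
      exact hzb (mem_petals.1 h).2.2.symm
  have hbPa : b ∉ C.petals p a := fun h => hba (mem_petals.1 h).2.2
  apply Finset.card_lt_card
  rw [Finset.ssubset_iff_of_subset]
  · refine ⟨a, by simp [ha], ?_⟩
    simp [hPa, Finset.card_insert_of_notMem hbPa, ha]
  · intro z
    simp only [Finset.mem_filter, Finset.mem_univ, true_and]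
    by_cases hza : z = a
    · subst hza
      simp [hPa, Finset.card_insert_of_notMem hbPa, ha]
    by_cases hzb : z = p b
    · subst hzb
      rw [hPz, Finset.card_erase_of_mem hbz]
      omega
    · rw [hP z hza hzb]
      exact id

theorem starLabel_ne_two_of_isMinOn (hp : C.IsCenterChoice p)
    (hmin : IsMinOn C.singletonCount {q | C.IsCenterChoice q} p)
    (hab : K.Adj a b) (hb : C b = 1) (hba : p b ≠ a) (ha : (C.petals p a).card = 1) :
    starLabel (C.petals p (p b)) b ≠ 2 := by
  classical
  have hz : (C.petals p (p b)).card = 2 := by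
    by_contra hz
    exact (singletonCount_update_lt hp hab hb hba ha hz).not_ge
      (isMinOn_iff.1 hmin _ (hp.update hab))
  exact starLabel_ne_two_of_card_eq_two hz (hp.self_mem_petals hab hb)

theorem cfSatisfies_of_petals_subset (hp : C.IsCenterChoice p) (hab : K.Adj a b)
    (hb : C b = 1) (hPa : C.petals p a ⊆ {b}) :
    CFSatisfies (C.starForest p) (C.starColoring p) s(a, b) := by
  have hbz := hp.self_mem_petals hab hb
  refine ⟨_, s(p b, b), ⟨mk_mem_starForest_edgeSet hbz, ⟨b, by simp, by simp⟩, rfl⟩, ?_⟩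
  rintro f ⟨hf, hinc, -⟩
  rcases starForest_incident hab hb hf hinc with ⟨w, hw, rfl⟩ | rfl
  · obtain rfl := Finset.mem_singleton.1 (hPa hw)
    rw [(mem_petals.1 hw).2.2]
  · rfl

theorem cfSatisfies_of_existsUnique_starLabel (hp : C.IsCenterChoice p) (hab : K.Adj a b)
    (hb : C b = 1) {r : Fin 3} (hr : ∃! w, w ∈ C.petals p a ∧ starLabel (C.petals p a) w = r)
    (hz : p b = a ∨ starLabel (C.petals p (p b)) b ≠ r) :
    CFSatisfies (C.starForest p) (C.starColoring p) s(a, b) := by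
  obtain ⟨w, ⟨hw, hwr⟩, huniq⟩ := hr
  refine ⟨r, s(a, w), ⟨mk_mem_starForest_edgeSet hw, ⟨a, by simp, by simp⟩,
    by rw [starColoring_mk hw, hwr]⟩, ?_⟩
  rintro f ⟨hf, hinc, hfr⟩
  rcases starForest_incident hab hb hf hinc with ⟨w', hw', rfl⟩ | rfl
  · rw [huniq w' ⟨hw', (starColoring_mk hw').symm.trans hfr⟩]
  · rw [starColoring_mk (hp.self_mem_petals hab hb)] at hfr
    rcases hz with hz | hz
    · rw [hz] at hfr ⊢
      rw [huniq b ⟨hz ▸ hp.self_mem_petals hab hb, hfr⟩]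
    · exact absurd hfr hz

theorem cfSatisfies_of_isMinOn (hp : C.IsCenterChoice p)
    (hmin : IsMinOn C.singletonCount {q | C.IsCenterChoice q} p)
    (hab : K.Adj a b) (hb : C b = 1) :
    CFSatisfies (C.starForest p) (C.starColoring p) s(a, b) := by
  by_cases hsub : C.petals p a ⊆ {b}
  · exact cfSatisfies_of_petals_subset hp hab hb hsub
  obtain ⟨x, hx, hxb⟩ := Finset.not_subset.1 hsub
  by_cases hcard : 2 ≤ (C.petals p a).card
  · -- a large star has two distinguished labels, and `b` can clash with at most one of them
    obtain ⟨r, hr2, hrb⟩ : ∃ r : Fin 3, r ≠ 2 ∧ starLabel (C.petals p (p b)) b ≠ r := by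
      by_cases h : starLabel (C.petals p (p b)) b = 0
      · exact ⟨1, by decide, by rw [h]; decide⟩
      · exact ⟨0, by decide, h⟩
    exact cfSatisfies_of_existsUnique_starLabel hp hab hb (existsUnique_starLabel hcard hr2)
      (Or.inr hrb)
  have h1 : (C.petals p a).card = 1 := by
    have := Finset.card_pos.2 ⟨x, hx⟩
    omega
  have hba : p b ≠ a := fun h => hxb <| Finset.mem_singleton.2 <|
    Finset.card_le_one.1 h1.le x hx b (h ▸ hp.self_mem_petals hab hb)
  refine cfSatisfies_of_existsUnique_starLabel hp hab hb (r := 2)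
    ⟨x, ⟨hx, starLabel_of_card_le_one h1.le x⟩,
      fun w hw => Finset.card_le_one.1 h1.le _ hw.1 _ hx⟩
    (Or.inr (starLabel_ne_two_of_isMinOn hp hmin hab hb hba h1))

end SimpleGraph.Coloring

theorem HasSCFColoring.of_isBipartite {V : Type*} [Fintype V] {K : SimpleGraph V}
    (hK : K.IsBipartite) : HasSCFColoring K 3 := by
  obtain ⟨C⟩ := hK
  obtain ⟨p, hp, hmin⟩ := Set.exists_min_image {p | C.IsCenterChoice p} C.singletonCount
    (Set.toFinite _) Coloring.exists_isCenterChoice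
  replace hmin := isMinOn_iff.2 hmin
  refine ⟨C.starForest p, Coloring.starForest_le, C.starColoring p, fun e he => ?_⟩
  induction e using Sym2.ind with
  | _ u v =>
    have huv : K.Adj u v := he
    by_cases hv : C v = 1
    · exact Coloring.cfSatisfies_of_isMinOn hp hmin huv hv
    · have hu : C u = 1 := by
        have := C.valid huv
        omega
      rw [Sym2.eq_swap]
      exact Coloring.cfSatisfies_of_isMinOn hp hmin huv.symm hu

namespace SimpleGraph

variable {V : Type*}

open Function

/-- The edges `uv` of `G` whose labels `ψ u`, `ψ v` first differ, from the top, in bit `i`. -/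
def levelGraph (G : SimpleGraph V) (ψ : V → ℕ) (i : ℕ) : SimpleGraph V where
  Adj u v := G.Adj u v ∧ (ψ u ^^^ ψ v).log2 = i
  symm := ⟨fun u v h => ⟨h.1.symm, Nat.xor_comm (ψ u) (ψ v) ▸ h.2⟩⟩
  loopless := ⟨fun _ h => G.irrefl h.1⟩

variable {G : SimpleGraph V} {ψ : V → ℕ}

@[simp]
theorem levelGraph_adj {i : ℕ} {u v : V} :
    (G.levelGraph ψ i).Adj u v ↔ G.Adj u v ∧ (ψ u ^^^ ψ v).log2 = i :=
  Iff.rfl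

theorem levelGraph_isBipartite (hψ : ∀ ⦃u v⦄, G.Adj u v → ψ u ≠ ψ v) (i : ℕ) :
    (G.levelGraph ψ i).IsBipartite := by
  refine ⟨Coloring.mk (fun v => if (ψ v).testBit i then 1 else 0) fun {u v} huv => ?_⟩
  rw [levelGraph_adj] at huv
  have hxor : ψ u ^^^ ψ v ≠ 0 := by simpa [Nat.xor_eq_zero_iff] using hψ huv.1
  have hbit := Nat.testBit_log2 hxor
  rw [huv.2, Nat.testBit_xor] at hbit
  cases hu : (ψ u).testBit i <;> cases hv : (ψ v).testBit i <;> simp_all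

theorem iSup_levelGraph {t : ℕ} (hψ : ∀ ⦃u v⦄, G.Adj u v → ψ u ≠ ψ v)
    (ht : ∀ v, ψ v < 2 ^ t) :
    ⨆ i : Fin t, G.levelGraph ψ i = G := by
  ext u v
  rw [iSup_adj]
  simp only [levelGraph_adj]
  refine ⟨fun ⟨_, h⟩ => h.1, fun huv => ⟨⟨_, ?_⟩, huv, rfl⟩⟩
  have hxor : ψ u ^^^ ψ v ≠ 0 := by simpa [Nat.xor_eq_zero_iff] using hψ huv
  exact (Nat.log2_lt hxor).2 (Nat.xor_lt_two_pow (ht u) (ht v))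

theorem pairwise_disjoint_levelGraph : Pairwise (Disjoint on G.levelGraph ψ) := by
  intro i j hij
  rw [onFun, ← disjoint_edgeSet, Set.disjoint_left]
  intro e hi hj
  induction e using Sym2.ind with
  | _ u v => exact hij (hi.2.symm.trans hj.2)

end SimpleGraph

theorem HasSCFColoring.of_colorable {V : Type*} [Fintype V] {G : SimpleGraph V} {t : ℕ}
    (ht : 0 < t) (hG : G.Colorable (2 ^ t)) : HasSCFColoring G (3 * t) := by
  obtain ⟨C⟩ := hG
  have hψ : ∀ ⦃u v⦄, G.Adj u v → (C u : ℕ) ≠ C v := fun _ _ h =>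
    Fin.val_injective.ne (C.valid h)
  have : Nonempty (Fin t) := ⟨⟨0, ht⟩⟩
  have h := HasSCFColoring.iSup
    (pairwise_disjoint_levelGraph.comp_of_injective Fin.val_injective)
    fun i : Fin t => HasSCFColoring.of_isBipartite (levelGraph_isBipartite hψ i)
  rwa [iSup_levelGraph hψ fun v => (C v).isLt, Fintype.card_fin, mul_comm] at h

/-- Every finite nonempty simple graph without isolated vertices satisfies
`χ'_sCF(G) ≤ 3⌈log₂ χ(G)⌉`. -/
theorem scfChromIndex_le_three_clog_chromaticNumber {V : Type*} [Fintype V] [Nonempty V]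
    (G : SimpleGraph V) (hNoIso : ∀ v : V, ∃ w : V, G.Adj v w) :
    scfChromIndex G ≤ 3 * Nat.clog 2 G.chromaticNumber.toNat := by
  obtain ⟨w, hw⟩ := hNoIso (Classical.arbitrary V)
  have hχ : 2 ≤ G.chromaticNumber.toNat := by
    have hfin : G.chromaticNumber ≠ ⊤ :=
      chromaticNumber_ne_top_iff_exists.2 ⟨_, G.colorable_of_fintype⟩
    simpa using ENat.toNat_le_toNat (two_le_chromaticNumber_of_adj hw) hfin
  refine scfChromIndex_le_s9 (HasSCFColoring.of_colorable (Nat.clog_pos one_lt_two hχ) ?_)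
  exact (colorable_chromaticNumber_of_fintype G).mono (Nat.le_pow_clog one_lt_two _)
end

section
/- For every integer n ≥ 2, the complete graph K_n satisfies χ'_sCF(K_n) ≤ 2⌈log₂ n⌉. -/
open SimpleGraph

/-!
Number the vertices `0, …, n - 1 < 2 ^ t` and cut `[0, 2 ^ t)` into dyadic blocks. For each level
`i < t` and each block of length `2 ^ (i + 1)`, join every vertex of the upper half of the block
to the first vertex (colour `(i, 0)`) and to the second vertex (colour `(i, 1)`) of the lower
half; at level `0` the lower half has only one vertex. The colour `(i, ρ)` is encoded as `2 i + ρ`,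
and is recovered from an edge `xy` with `y < x`: `i` is the highest bit of `x ^^^ y` and `ρ` the
parity of `y`.

Given `v < u`, let `i` be the highest bit in which they differ, so `u` and `v` lie in the two halves
of a block of level `i`. At level `0` the edge `uv` itself is the only edge of colour `(0, 0)` at
`u` or `v`. At a level `i > 0` pick `ρ ≠ v % 2 ^ i`: then no edge of colour `(i, ρ)` meets `v`,
while exactly one meets `u`.
-/

lemma Nat.log_two_xor_eq {x y i : ℕ} (hsame : x / 2 ^ (i + 1) = y / 2 ^ (i + 1))
    (hdiff : x / 2 ^ i ≠ y / 2 ^ i) : Nat.log 2 (x ^^^ y) = i := by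
  have hne : x ^^^ y ≠ 0 := fun h => hdiff (by rw [Nat.xor_eq_zero_iff.1 h])
  rw [Nat.log_eq_iff (Or.inr ⟨one_lt_two, hne⟩)]
  constructor
  · by_contra! hlt
    apply hdiff
    rw [← Nat.xor_eq_zero_iff, ← Nat.xor_div_two_pow, Nat.div_eq_of_lt hlt]
  · rw [← Nat.div_eq_zero_iff_lt (by positivity), Nat.xor_div_two_pow, hsame, Nat.xor_self]

lemma Nat.exists_dyadic_split {u v : ℕ} (hvu : v < u) :
    ∃ i, u / 2 ^ (i + 1) = v / 2 ^ (i + 1) ∧ u / 2 ^ i % 2 = 1 ∧ v / 2 ^ i % 2 = 0 := by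
  induction u using Nat.strong_induction_on generalizing v with
  | _ u ih =>
    by_cases hhalf : u / 2 = v / 2
    · exact ⟨0, by simpa using hhalf, by omega, by omega⟩
    · obtain ⟨i, hi⟩ := ih (u / 2) (by omega) (show v / 2 < u / 2 by omega)
      refine ⟨i + 1, ?_⟩
      simpa only [Nat.div_div_eq_div_mul, ← pow_succ'] using hi

/-- `y` is the `ρ`-th vertex of the dyadic block of length `2 ^ (i + 1)` containing `x`, and `x`
lies in the upper half of that block. -/
structure DyadicEdge (i ρ y x : ℕ) : Prop where
  lt_two : ρ < 2
  lt_two_pow : ρ < 2 ^ i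
  lower_eq : y = 2 ^ (i + 1) * (x / 2 ^ (i + 1)) + ρ
  upper_half : x / 2 ^ i % 2 = 1

namespace DyadicEdge

variable {i ρ x y z : ℕ}

lemma div_eq (h : DyadicEdge i ρ y x) : y / 2 ^ i = 2 * (x / 2 ^ (i + 1)) := by
  rw [h.lower_eq, pow_succ, mul_assoc, Nat.mul_add_div (by positivity),
    Nat.div_eq_of_lt h.lt_two_pow, add_zero]

lemma mod_eq (h : DyadicEdge i ρ y x) : y % 2 ^ i = ρ := by
  rw [h.lower_eq, pow_succ, mul_assoc, Nat.mul_add_mod, Nat.mod_eq_of_lt h.lt_two_pow]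

lemma lower_half (h : DyadicEdge i ρ y x) : y / 2 ^ i % 2 = 0 := by
  rw [h.div_eq]; omega

lemma upper_div (h : DyadicEdge i ρ y x) : x / 2 ^ i = 2 * (x / 2 ^ (i + 1)) + 1 := by
  rw [pow_succ, ← Nat.div_div_eq_div_mul]; have := h.upper_half; omega

lemma lt (h : DyadicEdge i ρ y x) : y < x := by
  have hx := Nat.div_add_mod x (2 ^ i)
  have hy := Nat.div_add_mod y (2 ^ i)
  rw [h.upper_div, mul_add, mul_one] at hx
  rw [h.div_eq, h.mod_eq] at hy
  have := h.lt_two_pow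
  omega

lemma log_two_xor (h : DyadicEdge i ρ y x) : Nat.log 2 (x ^^^ y) = i := by
  refine Nat.log_two_xor_eq ?_ (by rw [h.upper_div, h.div_eq]; omega)
  rw [pow_succ, ← Nat.div_div_eq_div_mul, ← Nat.div_div_eq_div_mul, h.upper_div, h.div_eq]
  omega

lemma mod_two (h : DyadicEdge i ρ y x) : y % 2 = ρ := by
  rw [h.lower_eq, pow_succ', mul_assoc, Nat.mul_add_mod, Nat.mod_eq_of_lt h.lt_two]

lemma succ_of_level_zero (h : DyadicEdge 0 ρ y x) : x = y + 1 := by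
  obtain ⟨-, hρ, hy, hx⟩ := h
  simp only [pow_zero, Nat.div_one, zero_add, pow_one] at hρ hy hx
  omega

lemma eq_right_of_mem (h : DyadicEdge i ρ y x) (hz : z / 2 ^ i % 2 = 1) (hmem : z ∈ s(y, x)) :
    z = x := by
  rcases Sym2.mem_iff.1 hmem with rfl | rfl
  · have := h.lower_half; omega
  · rfl

lemma eq_left_of_mem (h : DyadicEdge i ρ y x) (hz : z / 2 ^ i % 2 = 0) (hmem : z ∈ s(y, x)) :
    z = y := by
  rcases Sym2.mem_iff.1 hmem with rfl | rfl
  · rfl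
  · have := h.upper_half; omega

theorem exists_isolating {u v : ℕ} (hvu : v < u) :
    ∃ i ρ w, DyadicEdge i ρ w u ∧
      ∀ p q, DyadicEdge i ρ p q → (u ∈ s(p, q) ∨ v ∈ s(p, q)) → p = w ∧ q = u := by
  obtain ⟨i, hsame, hu, hv⟩ := Nat.exists_dyadic_split hvu
  rcases Nat.eq_zero_or_pos i with rfl | hi
  · simp only [zero_add, pow_one, pow_zero, Nat.div_one] at hsame hu hv
    have hvu_edge : DyadicEdge 0 0 v u :=
      ⟨two_pos, one_pos, by simp only [zero_add, pow_one, add_zero]; omega, by simpa using hu⟩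
    refine ⟨0, 0, v, hvu_edge, fun p q hpq htouch => ?_⟩
    rcases htouch with hmem | hmem
    · obtain rfl := hpq.eq_right_of_mem (by simpa using hu) hmem
      exact ⟨hpq.lower_eq.trans hvu_edge.lower_eq.symm, rfl⟩
    · obtain rfl := hpq.eq_left_of_mem (by simpa using hv) hmem
      exact ⟨rfl, by rw [hpq.succ_of_level_zero]; omega⟩
  · obtain ⟨ρ, hρ, hvρ⟩ : ∃ ρ < 2, v % 2 ^ i ≠ ρ :=
      ⟨if v % 2 ^ i = 0 then 1 else 0, by split_ifs <;> omega, by split_ifs <;> omega⟩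
    have hw : DyadicEdge i ρ (2 ^ (i + 1) * (u / 2 ^ (i + 1)) + ρ) u :=
      ⟨hρ, hρ.trans_le (Nat.le_self_pow hi.ne' 2), rfl, hu⟩
    refine ⟨i, ρ, _, hw, fun p q hpq htouch => ?_⟩
    rcases htouch with hmem | hmem
    · obtain rfl := hpq.eq_right_of_mem hu hmem
      exact ⟨hpq.lower_eq, rfl⟩
    · obtain rfl := hpq.eq_left_of_mem hv hmem
      exact absurd hpq.mod_eq hvρ

end DyadicEdge

def dyadicGraph : SimpleGraph ℕ :=
  SimpleGraph.fromRel fun y x => ∃ i ρ, DyadicEdge i ρ y x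

def dyadicColour : Sym2 ℕ → ℕ :=
  Sym2.lift ⟨fun x y => 2 * Nat.log 2 (x ^^^ y) + min x y % 2,
    fun x y => by dsimp only; rw [Nat.xor_comm, min_comm]⟩

lemma DyadicEdge.dyadicColour_eq {i ρ y x : ℕ} (h : DyadicEdge i ρ y x) :
    dyadicColour s(y, x) = 2 * i + ρ := by
  simp only [dyadicColour, Sym2.lift_mk, Nat.xor_comm y, h.log_two_xor, min_eq_left h.lt.le,
    h.mod_two]

lemma dyadicColour_lt {t : ℕ} (ht : t ≠ 0) {e : Sym2 ℕ} (he : ∀ x ∈ e, x < 2 ^ t) :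
    dyadicColour e < 2 * t := by
  induction e using Sym2.ind with
  | _ x y =>
    have hlog : Nat.log 2 (x ^^^ y) < t :=
      Nat.log_lt_of_lt_pow' ht (Nat.xor_lt_two_pow (he x (by simp)) (he y (by simp)))
    simp only [dyadicColour, Sym2.lift_mk]
    omega

theorem dyadicGraph_isolating {u v : ℕ} (hvu : v < u) :
    ∃ w < u, dyadicGraph.Adj w u ∧ ∀ g ∈ dyadicGraph.edgeSet, (u ∈ g ∨ v ∈ g) →
      dyadicColour g = dyadicColour s(w, u) → g = s(w, u) := by
  obtain ⟨i, ρ, w, hw, hunique⟩ := DyadicEdge.exists_isolating hvu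
  have horiented : ∀ j σ p q, DyadicEdge j σ p q → (u ∈ s(p, q) ∨ v ∈ s(p, q)) →
      dyadicColour s(p, q) = dyadicColour s(w, u) → s(p, q) = s(w, u) := by
    intro j σ p q hpq htouch hcol
    rw [hpq.dyadicColour_eq, hw.dyadicColour_eq] at hcol
    obtain ⟨rfl, rfl⟩ : j = i ∧ σ = ρ := by have := hpq.lt_two; have := hw.lt_two; omega
    obtain ⟨rfl, rfl⟩ := hunique p q hpq htouch
    rfl
  refine ⟨w, hw.lt, ⟨hw.lt.ne, Or.inl ⟨i, ρ, hw⟩⟩, fun g hg htouch hcol => ?_⟩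
  induction g using Sym2.ind with
  | _ p q =>
    obtain ⟨-, ⟨j, σ, hpq⟩ | ⟨j, σ, hpq⟩⟩ := hg
    · exact horiented j σ p q hpq htouch hcol
    · rw [Sym2.eq_swap] at htouch hcol ⊢
      exact horiented j σ q p hpq htouch hcol

def dyadicColouring {n t : ℕ} (ht : t ≠ 0) (hnt : n ≤ 2 ^ t) (e : Sym2 (Fin n)) : Fin (2 * t) :=
  ⟨dyadicColour (e.map Fin.val), dyadicColour_lt ht fun x hx => by
    obtain ⟨a, -, rfl⟩ := Sym2.mem_map.1 hx
    exact a.isLt.trans_le hnt⟩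

theorem cfSatisfies_dyadicColouring {n t : ℕ} (ht : t ≠ 0) (hnt : n ≤ 2 ^ t) {a b : Fin n}
    (hab : a ≠ b) : CFSatisfies (dyadicGraph.comap Fin.val) (dyadicColouring ht hnt) s(a, b) := by
  wlog hba : b < a generalizing a b
  · rw [Sym2.eq_swap]
    exact this hab.symm (lt_of_le_of_ne (not_lt.1 hba) hab)
  obtain ⟨w, hwa, hadj, hunique⟩ := dyadicGraph_isolating hba
  let W : Fin n := ⟨w, hwa.trans a.isLt⟩
  refine ⟨dyadicColouring ht hnt s(W, a), s(W, a), ⟨hadj, ⟨a, by simp, by simp⟩, rfl⟩, ?_⟩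
  rintro g ⟨hg, ⟨x, hxe, hxg⟩, hcol⟩
  apply Sym2.map.injective Fin.val_injective
  refine hunique _ ?_ ?_ (congrArg Fin.val hcol)
  · induction g using Sym2.ind
    exact hg
  · rcases Sym2.mem_iff.1 hxe with rfl | rfl
    · exact Or.inl (Sym2.mem_map.2 ⟨_, hxg, rfl⟩)
    · exact Or.inr (Sym2.mem_map.2 ⟨_, hxg, rfl⟩)

/-- For every `n ≥ 2`, `χ'_sCF(K_n) ≤ 2⌈log₂ n⌉`. -/
theorem scfChromIndex_complete_le (n : ℕ) (hn : 2 ≤ n) :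
    scfChromIndex (⊤ : SimpleGraph (Fin n)) ≤ 2 * Nat.clog 2 n := by
  have ht : Nat.clog 2 n ≠ 0 := (Nat.clog_pos one_lt_two hn).ne'
  have hnt : n ≤ 2 ^ Nat.clog 2 n := Nat.le_pow_clog one_lt_two n
  refine Nat.sInf_le ⟨dyadicGraph.comap Fin.val, le_top, dyadicColouring ht hnt, fun e he => ?_⟩
  induction e using Sym2.ind with
  | _ a b => exact cfSatisfies_dyadicColouring ht hnt he
end
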